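/- arXiv:1701.03010 — 11 statements merged into one kernel-verified Lean document; each statement's English description precedes it below -/
import Mathlib

section
/- The biclique cover number of the complete graph K_n equals ⌈log₂ n⌉. -/
/-- `C` is a biclique cover of `G`: a collection of complete bipartite graphs
(each given by two disjoint vertex classes) whose edge sets union to `E(G)`. -/
def IsBicliqueCover {V : Type*} (G : SimpleGraph V) (C : Finset (Finset V × Finset V)) : Prop :=
  (∀ p ∈ C, Disjoint p.1 p.2) ∧
  ∀ x y, G.Adj x y ↔ ∃ p ∈ C, (x ∈ p.1 ∧ y ∈ p.2) ∨ (x ∈ p.2 ∧ y ∈ p.1)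

/-- The biclique cover number of `G`. -/
noncomputable def bcNum {V : Type*} (G : SimpleGraph V) : ℕ :=
  sInf {k | ∃ C, IsBicliqueCover G C ∧ C.card = k}

/-!
Lower bound: a vertex `v` of a biclique cover `C` of `K_n` determines the set of bicliques of `C`
having `v` on their first side, and two distinct vertices, being covered by some biclique with
one on each side, give different sets; hence `n ≤ 2 ^ |C|`.
Upper bound: label the vertices by their binary expansions with `⌈log₂ n⌉` bits; for each bit
position, the vertices with that bit `0` versus those with that bit `1` form a biclique, and two
distinct labels differ at some position.
-/

section BicliqueCover

variable {V : Type*}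

theorem bcNum_le_card {G : SimpleGraph V} {C : Finset (Finset V × Finset V)}
    (hC : IsBicliqueCover G C) : bcNum G ≤ C.card :=
  Nat.sInf_le ⟨C, hC, rfl⟩

theorem le_bcNum {G : SimpleGraph V} {k : ℕ} (hG : ∃ C, IsBicliqueCover G C)
    (hk : ∀ C, IsBicliqueCover G C → k ≤ C.card) : k ≤ bcNum G := by
  obtain ⟨C, hC⟩ := hG
  refine le_csInf ⟨C.card, C, hC, rfl⟩ ?_
  rintro _ ⟨D, hD, rfl⟩
  exact hk D hD

theorem isBicliqueCover_top_iff {C : Finset (Finset V × Finset V)} :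
    IsBicliqueCover (⊤ : SimpleGraph V) C ↔ (∀ p ∈ C, Disjoint p.1 p.2) ∧
      ∀ x y, x ≠ y → ∃ p ∈ C, (x ∈ p.1 ∧ y ∈ p.2) ∨ (x ∈ p.2 ∧ y ∈ p.1) := by
  refine and_congr_right fun hdisj => forall₂_congr fun x y => ?_
  rw [SimpleGraph.top_adj]
  refine ⟨fun h => h.mp, fun h => ⟨h, ?_⟩⟩
  rintro ⟨p, hp, ⟨hx, hy⟩ | ⟨hx, hy⟩⟩ rfl
  · exact Finset.disjoint_left.mp (hdisj p hp) hx hy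
  · exact Finset.disjoint_left.mp (hdisj p hp) hy hx

theorem IsBicliqueCover.filter_fst_ne_of_adj [DecidableEq V] {G : SimpleGraph V}
    {C : Finset (Finset V × Finset V)} (hC : IsBicliqueCover G C) {x y : V} (hxy : G.Adj x y) :
    C.filter (x ∈ ·.1) ≠ C.filter (y ∈ ·.1) := by
  intro h
  obtain ⟨p, hp, ⟨hx, hy⟩ | ⟨hx, hy⟩⟩ := (hC.2 x y).mp hxy
  · have hy' : y ∈ p.1 := (Finset.mem_filter.mp (h ▸ Finset.mem_filter.mpr ⟨hp, hx⟩ : p ∈ C.filter (y ∈ ·.1))).2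
    exact Finset.disjoint_left.mp (hC.1 p hp) hy' hy
  · have hx' : x ∈ p.1 := (Finset.mem_filter.mp (h.symm ▸ Finset.mem_filter.mpr ⟨hp, hy⟩ : p ∈ C.filter (x ∈ ·.1))).2
    exact Finset.disjoint_left.mp (hC.1 p hp) hx' hx

theorem IsBicliqueCover.card_le_two_pow [Fintype V] {C : Finset (Finset V × Finset V)}
    (hC : IsBicliqueCover (⊤ : SimpleGraph V) C) : Fintype.card V ≤ 2 ^ C.card := by
  classical
  have hinj : Set.InjOn (fun v => C.filter (v ∈ ·.1)) (Finset.univ : Finset V) :=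
    fun x _ y _ h => by_contra fun hxy => hC.filter_fst_ne_of_adj hxy h
  simpa using Finset.card_le_card_of_injOn _
    (fun v _ => Finset.mem_powerset.mpr (Finset.filter_subset _ C)) hinj

theorem IsBicliqueCover.clog_card_le [Fintype V] {C : Finset (Finset V × Finset V)}
    (hC : IsBicliqueCover (⊤ : SimpleGraph V) C) : Nat.clog 2 (Fintype.card V) ≤ C.card :=
  (Nat.clog_le_iff_le_pow one_lt_two).mpr hC.card_le_two_pow

end BicliqueCover

section BitCover

theorem Nat.exists_lt_testBit_ne_of_ne {x y k : ℕ} (hx : x < 2 ^ k) (hy : y < 2 ^ k)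
    (hxy : x ≠ y) : ∃ i < k, x.testBit i ≠ y.testBit i := by
  obtain ⟨i, hi⟩ := Nat.exists_testBit_ne_of_ne hxy
  refine ⟨i, lt_of_not_ge fun hki => hi ?_, hi⟩
  have hpow : 2 ^ k ≤ 2 ^ i := Nat.pow_le_pow_right two_pos hki
  rw [Nat.testBit_lt_two_pow (hx.trans_le hpow), Nat.testBit_lt_two_pow (hy.trans_le hpow)]

def bitCover (n k : ℕ) : Finset (Finset (Fin n) × Finset (Fin n)) :=
  (Finset.range k).image fun i =>
    (Finset.univ.filter fun v : Fin n => (v : ℕ).testBit i = false,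
      Finset.univ.filter fun v : Fin n => (v : ℕ).testBit i = true)

theorem card_bitCover_le (n k : ℕ) : (bitCover n k).card ≤ k :=
  Finset.card_image_le.trans (Finset.card_range k).le

theorem isBicliqueCover_bitCover {n k : ℕ} (h : n ≤ 2 ^ k) :
    IsBicliqueCover (⊤ : SimpleGraph (Fin n)) (bitCover n k) := by
  refine isBicliqueCover_top_iff.mpr ⟨?_, fun x y hxy => ?_⟩
  · simp only [bitCover, Finset.mem_image, Finset.mem_range]
    rintro _ ⟨i, -, rfl⟩
    exact Finset.disjoint_left.mpr fun v hv hv' => by simp_all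
  · obtain ⟨i, hik, hi⟩ := Nat.exists_lt_testBit_ne_of_ne (x.isLt.trans_le h)
      (y.isLt.trans_le h) (Fin.val_ne_of_ne hxy)
    refine ⟨_, Finset.mem_image_of_mem _ (Finset.mem_range.mpr hik), ?_⟩
    cases hx : (x : ℕ).testBit i <;> cases hy : (y : ℕ).testBit i <;> simp_all

end BitCover

theorem stmt2_general {n : ℕ} :
    bcNum (⊤ : SimpleGraph (Fin n)) = Nat.clog 2 n := by
  have hcover := isBicliqueCover_bitCover (Nat.le_pow_clog one_lt_two n)
  refine le_antisymm ((bcNum_le_card hcover).trans (card_bitCover_le _ _)) ?_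
  refine le_bcNum ⟨_, hcover⟩ fun C hC => ?_
  simpa using hC.clog_card_le

/-- The biclique cover number of the complete graph `K_n` is `⌈log₂ n⌉`. -/
theorem stmt2 {n : ℕ} (hn : 1 ≤ n) :
    bcNum (⊤ : SimpleGraph (Fin n)) = Nat.clog 2 n :=
  stmt2_general
end

section
/- For n > k ≥ 1, the union of k maximal chains in B_n whose pairwise intersections are exactly {∅, [n]} contains no k+1 pairwise incomparable sets, and adding any other subset of [n] creates k+1 pairwise incomparable sets; hence isat(n, A_{k+1}) ≤ k(n-1) + 2. -/
/-- `F` contains `m` pairwise incomparable sets (an induced copy of the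
antichain `A_m`). -/
def AntichainCopy {n : ℕ} (m : ℕ) (F : Finset (Finset (Fin n))) : Prop :=
  ∃ G ⊆ F, G.card = m ∧ IsAntichain (· ⊆ ·) (G : Set (Finset (Fin n)))

/-- `F` is induced-`A_m`-saturated in `B_n`. -/
def ASaturated {n : ℕ} (m : ℕ) (F : Finset (Finset (Fin n))) : Prop :=
  ¬ AntichainCopy m F ∧ ∀ S ∉ F, AntichainCopy m (insert S F)

lemma mem_of_forall_comparable {n : ℕ} {C : Finset (Finset (Fin n))}
    (hC : Maximal (fun C : Finset (Finset (Fin n)) =>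
      IsChain (· ⊆ ·) (C : Set (Finset (Fin n)))) C)
    {X : Finset (Fin n)} (h : ∀ Y ∈ C, X ⊆ Y ∨ Y ⊆ X) : X ∈ C := by
  have hchain : IsChain (· ⊆ ·) (↑(insert X C) : Set (Finset (Fin n))) := by
    rw [Finset.coe_insert]
    exact hC.1.insert (fun b hb _ => h b hb)
  exact (hC.2 hchain (Finset.subset_insert X C)) (Finset.mem_insert_self X C)

lemma chain_subset_of_card_le {n : ℕ} {C : Finset (Finset (Fin n))}
    (hC : IsChain (· ⊆ ·) (C : Set (Finset (Fin n))))
    {X Y : Finset (Fin n)} (hX : X ∈ C) (hY : Y ∈ C) (h : X.card ≤ Y.card) : X ⊆ Y := by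
  rcases eq_or_ne X Y with rfl | hne
  · exact subset_rfl
  rcases hC hX hY hne with h' | h'
  · exact h'
  · rw [Finset.eq_of_subset_of_card_le h' h]

lemma exists_card_mem {n : ℕ} {C : Finset (Finset (Fin n))}
    (hC : Maximal (fun C : Finset (Finset (Fin n)) =>
      IsChain (· ⊆ ·) (C : Set (Finset (Fin n)))) C)
    {m : ℕ} (hm : m ≤ n) : ∃ A ∈ C, A.card = m := by
  by_contra hcon
  push_neg at hcon
  have h0 : ∅ ∈ C := mem_of_forall_comparable hC (fun Y _ => Or.inl (Finset.empty_subset Y))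
  have hU : Finset.univ ∈ C :=
    mem_of_forall_comparable hC (fun Y _ => Or.inr (Finset.subset_univ Y))
  have hCl : (C.filter (fun X => X.card ≤ m)).Nonempty := ⟨∅, by simp [h0]⟩
  have hCu : (C.filter (fun X => m ≤ X.card)).Nonempty :=
    ⟨Finset.univ, by simp [hU, Finset.card_univ, hm]⟩
  obtain ⟨A, hA, hAmax⟩ := Finset.exists_max_image _ Finset.card hCl
  obtain ⟨B, hB, hBmin⟩ := Finset.exists_min_image _ Finset.card hCu
  rw [Finset.mem_filter] at hA hB
  have hAm : A.card < m := lt_of_le_of_ne hA.2 (hcon A hA.1)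
  have hBm : m < B.card := lt_of_le_of_ne hB.2 (fun e => hcon B hB.1 e.symm)
  have hAB : A ⊆ B := chain_subset_of_card_le hC.1 hA.1 hB.1 (by omega)
  obtain ⟨Y, hAY, hYB, hYcard⟩ :=
    Finset.exists_subsuperset_card_eq (n := m) hAB (by omega) (by omega)
  have hYC : Y ∈ C := by
    apply mem_of_forall_comparable hC
    intro X hX
    rcases le_or_gt X.card m with hx | hx
    · exact Or.inr ((chain_subset_of_card_le hC.1 hX hA.1
        (hAmax X (Finset.mem_filter.mpr ⟨hX, hx⟩))).trans hAY)
    · exact Or.inl (hYB.trans (chain_subset_of_card_le hC.1 hB.1 hX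
        (hBmin X (Finset.mem_filter.mpr ⟨hX, hx.le⟩))))
  exact hcon Y hYC hYcard

lemma chain_card_le {n : ℕ} {C : Finset (Finset (Fin n))}
    (hC : IsChain (· ⊆ ·) (C : Set (Finset (Fin n)))) : C.card ≤ n + 1 := by
  have hinj : Set.InjOn Finset.card (C : Set (Finset (Fin n))) := by
    intro X hX Y hY h
    rcases eq_or_ne X Y with rfl | hne
    · rfl
    rcases hC hX hY hne with h' | h'
    · exact Finset.eq_of_subset_of_card_le h' h.ge
    · exact (Finset.eq_of_subset_of_card_le h' h.le).symm
  calc C.card = (C.image Finset.card).card := (Finset.card_image_of_injOn hinj).symm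
    _ ≤ (Finset.range (n + 1)).card := by
        apply Finset.card_le_card
        intro x hx
        obtain ⟨X, _, rfl⟩ := Finset.mem_image.mp hx
        simpa [Nat.lt_succ_iff] using (Finset.card_le_univ X).trans_eq (by simp)
    _ = n + 1 := Finset.card_range _

/-- The union of `k` maximal chains of `B_n` whose pairwise intersections are
exactly `{∅, [n]}` is induced-`A_{k+1}`-saturated; hence
`isat(n, A_{k+1}) ≤ k(n-1) + 2`. -/
theorem stmt7 {n k : ℕ} (hk : 1 ≤ k) (hn : k < n)
    (𝒞 : Fin k → Finset (Finset (Fin n)))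
    (hmax : ∀ i, Maximal (fun C : Finset (Finset (Fin n)) =>
      IsChain (· ⊆ ·) (C : Set (Finset (Fin n)))) (𝒞 i))
    (hint : ∀ i j, i ≠ j → 𝒞 i ∩ 𝒞 j = {∅, Finset.univ}) :
    ASaturated (k + 1) (Finset.univ.biUnion 𝒞) ∧
    sInf {m | ∃ F : Finset (Finset (Fin n)), ASaturated (k + 1) F ∧ F.card = m}
      ≤ k * (n - 1) + 2 := by
  set F := Finset.univ.biUnion 𝒞 with hF
  have i0 : Fin k := ⟨0, hk⟩
  -- no antichain of size k+1 in F
  have hno : ¬ AntichainCopy (k + 1) F := by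
    rintro ⟨G, hGF, hGcard, hGA⟩
    set f : Finset (Fin n) → Fin k :=
      fun g => if h : ∃ i, g ∈ 𝒞 i then h.choose else i0 with hf
    have hfmem : ∀ g ∈ G, g ∈ 𝒞 (f g) := by
      intro g hg
      have := hGF hg
      rw [hF, Finset.mem_biUnion] at this
      obtain ⟨i, _, hi⟩ := this
      have hex : ∃ i, g ∈ 𝒞 i := ⟨i, hi⟩
      simp only [hf, dif_pos hex]
      exact hex.choose_spec
    obtain ⟨x, hx, y, hy, hxy, hfeq⟩ :=
      Finset.exists_ne_map_eq_of_card_lt_of_maps_to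
        (s := G) (t := (Finset.univ : Finset (Fin k)))
        (by simp [hGcard]) (fun a _ => Finset.mem_univ (f a))
    have hxc : x ∈ 𝒞 (f x) := hfmem x hx
    have hyc : y ∈ 𝒞 (f x) := hfeq ▸ hfmem y hy
    rcases (hmax (f x)).1 hxc hyc hxy with h | h
    · exact hGA hx hy hxy h
    · exact hGA hy hx hxy.symm h
  -- ∅ and univ are in F
  have h0F : (∅ : Finset (Fin n)) ∈ F := by
    rw [hF, Finset.mem_biUnion]
    exact ⟨i0, Finset.mem_univ _,
      mem_of_forall_comparable (hmax i0) (fun Y _ => Or.inl (Finset.empty_subset Y))⟩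
  have hUF : (Finset.univ : Finset (Fin n)) ∈ F := by
    rw [hF, Finset.mem_biUnion]
    exact ⟨i0, Finset.mem_univ _,
      mem_of_forall_comparable (hmax i0) (fun Y _ => Or.inr (Finset.subset_univ Y))⟩
  have hsat : ASaturated (k + 1) F := by
    refine ⟨hno, fun S hS => ?_⟩
    have hSne : S ≠ ∅ := fun e => hS (e ▸ h0F)
    have hSnu : S ≠ Finset.univ := fun e => hS (e ▸ hUF)
    have hSpos : 0 < S.card := Finset.card_pos.mpr (Finset.nonempty_iff_ne_empty.mpr hSne)
    have hSlt : S.card < n := by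
      have hle : S.card ≤ n := (Finset.card_le_univ S).trans_eq (by simp)
      refine lt_of_le_of_ne hle (fun e => hSnu ?_)
      exact Finset.eq_univ_of_card S (by rw [Fintype.card_fin]; exact e)
    have hSnotin : ∀ i, S ∉ 𝒞 i := by
      intro i hi
      exact hS (by rw [hF, Finset.mem_biUnion]; exact ⟨i, Finset.mem_univ _, hi⟩)
    choose T hTmem hTcard using fun i => exists_card_mem (hmax i) (m := S.card) hSlt.le
    have hTinj : Function.Injective T := by
      intro i j hij
      by_contra hne
      have : T i ∈ 𝒞 i ∩ 𝒞 j := Finset.mem_inter.mpr ⟨hTmem i, hij ▸ hTmem j⟩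
      rw [hint i j hne] at this
      rcases Finset.mem_insert.mp this with h | h
      · have hc := hTcard i
        rw [h, Finset.card_empty] at hc
        omega
      · rw [Finset.mem_singleton] at h
        have hc := hTcard i
        rw [h, Finset.card_univ, Fintype.card_fin] at hc
        omega
    refine ⟨insert S (Finset.image T Finset.univ), ?_, ?_, ?_⟩
    · intro x hx
      rcases Finset.mem_insert.mp hx with rfl | hx
      · exact Finset.mem_insert_self _ _
      · obtain ⟨i, _, rfl⟩ := Finset.mem_image.mp hx
        refine Finset.mem_insert_of_mem ?_
        rw [hF, Finset.mem_biUnion]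
        exact ⟨i, Finset.mem_univ _, hTmem i⟩
    · rw [Finset.card_insert_of_notMem, Finset.card_image_of_injective _ hTinj]
      · simp
      · intro hmem
        obtain ⟨i, _, he⟩ := Finset.mem_image.mp hmem
        exact hSnotin i (he ▸ hTmem i)
    · have hcards : ∀ x ∈ insert S (Finset.image T Finset.univ), x.card = S.card := by
        intro x hx
        rcases Finset.mem_insert.mp hx with rfl | hx
        · rfl
        · obtain ⟨i, _, rfl⟩ := Finset.mem_image.mp hx
          exact hTcard i
      intro a ha b hb hne hsub
      rw [Finset.mem_coe] at ha hb
      exact hne (Finset.eq_of_subset_of_card_le hsub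
        (le_of_eq ((hcards b hb).trans (hcards a ha).symm)))
  refine ⟨hsat, ?_⟩
  -- cardinality bound
  have hcard : F.card ≤ k * (n - 1) + 2 := by
    have hsub : F ⊆ ({∅, Finset.univ} : Finset (Finset (Fin n))) ∪
        Finset.univ.biUnion (fun i => 𝒞 i \ {∅, Finset.univ}) := by
      intro X hX
      rw [hF, Finset.mem_biUnion] at hX
      obtain ⟨i, _, hi⟩ := hX
      by_cases hx : X ∈ ({∅, Finset.univ} : Finset (Finset (Fin n)))
      · exact Finset.mem_union_left _ hx
      · exact Finset.mem_union_right _ (Finset.mem_biUnion.mpr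
          ⟨i, Finset.mem_univ _, Finset.mem_sdiff.mpr ⟨hi, hx⟩⟩)
    have h2 : ({∅, Finset.univ} : Finset (Finset (Fin n))).card = 2 := by
      rw [Finset.card_insert_of_notMem, Finset.card_singleton]
      simp only [Finset.mem_singleton]
      intro h
      have : (0 : ℕ) = n := by simpa [Finset.card_univ] using congrArg Finset.card h
      omega
    have hpart : ∀ i, (𝒞 i \ ({∅, Finset.univ} : Finset (Finset (Fin n)))).card ≤ n - 1 := by
      intro i
      have hss : ({∅, Finset.univ} : Finset (Finset (Fin n))) ⊆ 𝒞 i := by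
        intro x hx
        rcases Finset.mem_insert.mp hx with rfl | hx
        · exact mem_of_forall_comparable (hmax i) (fun Y _ => Or.inl (Finset.empty_subset Y))
        · rw [Finset.mem_singleton] at hx
          exact hx ▸ mem_of_forall_comparable (hmax i)
            (fun Y _ => Or.inr (Finset.subset_univ Y))
      rw [Finset.card_sdiff_of_subset hss, h2]
      have := chain_card_le (hmax i).1
      omega
    calc F.card ≤ ({∅, Finset.univ} : Finset (Finset (Fin n))).card +
          (Finset.univ.biUnion (fun i => 𝒞 i \ {∅, Finset.univ})).card := by
          exact (Finset.card_le_card hsub).trans (Finset.card_union_le _ _)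
      _ ≤ 2 + ∑ i : Fin k, (𝒞 i \ ({∅, Finset.univ} : Finset (Finset (Fin n)))).card := by
          rw [h2]; exact Nat.add_le_add_left (Finset.card_biUnion_le) 2
      _ ≤ 2 + ∑ _i : Fin k, (n - 1) := by
          exact Nat.add_le_add_left (Finset.sum_le_sum (fun i _ => hpart i)) 2
      _ = k * (n - 1) + 2 := by
          rw [Finset.sum_const, Finset.card_univ, Fintype.card_fin, smul_eq_mul]
          omega
  exact le_trans (Nat.sInf_le ⟨F, hsat, rfl⟩) hcard
end

section
/- For n > k ≥ 3, every induced-A_{k+1}-saturated family in B_n has size at least 3n - 1. -/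
open Finset
open scoped FinsetFamily

theorem Nat.self_le_choose {d r : ℕ} (hr : 0 < r) (hrd : r < d) : d ≤ d.choose r := by
  induction d generalizing r with
  | zero => omega
  | succ d ih =>
    obtain _ | _ | r := r
    · omega
    · simp
    · rw [Nat.choose_succ_succ']
      have := ih (r := r + 1) (by omega) (by omega)
      have := Nat.choose_pos (by omega : r + 1 + 1 ≤ d)
      omega

theorem IsChain.supClosed {α : Type*} [SemilatticeSup α] {s : Set α}
    (hs : IsChain (· ≤ ·) s) : SupClosed s := fun _ ha _ hb =>
  (hs.total ha hb).elim (fun h => (sup_eq_right.2 h).symm ▸ hb) fun h => (sup_eq_left.2 h).symm ▸ ha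

theorem IsChain.infClosed {α : Type*} [SemilatticeInf α] {s : Set α}
    (hs : IsChain (· ≤ ·) s) : InfClosed s := fun _ ha _ hb =>
  (hs.total ha hb).elim (fun h => (inf_eq_left.2 h).symm ▸ ha) fun h => (inf_eq_right.2 h).symm ▸ hb

theorem Finset.exists_greatest_of_isChain {α : Type*} [PartialOrder α] {s : Finset α}
    (hs : s.Nonempty) (hc : IsChain (· ≤ ·) (s : Set α)) : ∃ a ∈ s, ∀ b ∈ s, b ≤ a := by
  obtain ⟨a, ha⟩ := s.exists_maximal hs
  exact ⟨a, ha.prop, fun b hb => (hc.total hb ha.prop).elim id (ha.2 hb)⟩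

section Interval

variable {α : Type*} [DecidableEq α] {s t A B : Finset α} {i : ℕ}

theorem card_sub_card_le_card_slice_Icc (hst : s ⊆ t) (hs : #s < i) (ht : i < #t) :
    #t - #s ≤ #((Icc s t) # i) := by
  have hdisj : ∀ R ∈ (t \ s).powersetCard (i - #s), Disjoint s R := fun R hR =>
    disjoint_of_subset_right (mem_powersetCard.1 hR).1 disjoint_sdiff
  have hts : #(t \ s) = #t - #s := card_sdiff_of_subset hst
  calc #t - #s ≤ (#(t \ s)).choose (i - #s) := hts ▸ Nat.self_le_choose (by omega) (by omega)
    _ = #((t \ s).powersetCard (i - #s)) := (card_powersetCard _ _).symm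
    _ ≤ #((Icc s t) # i) := by
      refine card_le_card_of_injOn (s ∪ ·) (fun R hR => ?_) fun R hR R' hR' h => ?_
      · have hRts := (mem_powersetCard.1 hR).1
        rw [mem_coe, mem_slice, mem_Icc, card_union_of_disjoint (hdisj R hR),
          (mem_powersetCard.1 hR).2]
        exact ⟨⟨subset_union_left, union_subset hst (hRts.trans sdiff_subset)⟩, by omega⟩
      · rw [← union_sdiff_cancel_left (hdisj R hR), ← union_sdiff_cancel_left (hdisj R' hR')]
        exact congrArg (· \ s) h

theorem eq_inter_and_eq_union_of_slice_Icc_subset_pair (hst : s ⊆ t) (hs : #s < i)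
    (ht : i < #t) (hAB : A ≠ B) (hslice : (Icc s t) # i ⊆ {A, B}) :
    s = A ∩ B ∧ t = A ∪ B ∧ #t = i + 1 := by
  have hcount := card_sub_card_le_card_slice_Icc hst hs ht
  have hpair := (card_le_card hslice).trans card_le_two
  have heq : (Icc s t) # i = {A, B} :=
    eq_of_subset_of_card_le hslice (by rw [card_pair hAB]; omega)
  have hA := mem_slice.1 (heq ▸ mem_insert_self A {B})
  have hB := mem_slice.1 (heq ▸ mem_insert_of_mem (mem_singleton_self B))
  rw [mem_Icc] at hA hB
  have hAB' : ¬A ⊆ B := fun h => hAB (eq_of_subset_of_card_le h (by omega))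
  have hinter : #(A ∩ B) < #A :=
    card_lt_card ⟨inter_subset_left, fun h => hAB' (h.trans inter_subset_right)⟩
  have := card_union_add_card_inter A B
  exact ⟨eq_of_subset_of_card_le (subset_inter hA.1.1 hB.1.1) (by omega),
    (eq_of_subset_of_card_le (union_subset hA.1.2 hB.1.2) (by omega)).symm, by omega⟩

end Interval

theorem compls_slice {α : Type*} [Fintype α] [DecidableEq α] (𝒜 : Finset (Finset α)) {r : ℕ}
    (hr : r ≤ Fintype.card α) : 𝒜ᶜˢ # r = (𝒜 # (Fintype.card α - r))ᶜˢ := by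
  ext S
  simp only [mem_slice, mem_compls, card_compl]
  have := S.card_le_univ
  constructor <;> rintro ⟨h, h'⟩ <;> exact ⟨h, by omega⟩

section Dilworth

variable {α : Type*} [PartialOrder α]

def IsChainColoring (s : Finset α) (k : ℕ) (c : α → ℕ) : Prop :=
  (∀ a ∈ s, c a < k) ∧ ∀ a ∈ s, ∀ b ∈ s, c a = c b → a ≤ b ∨ b ≤ a

def LiesOnAntichain (s : Finset α) (k : ℕ) (a : α) : Prop :=
  ∃ t ⊆ s, IsAntichain (· ≤ ·) (t : Set α) ∧ #t = k ∧ a ∈ t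

structure IsColorTop (s : Finset α) (k : ℕ) (c : α → ℕ) (j : ℕ) (a : α) : Prop where
  mem : a ∈ s
  color : c a = j
  liesOn : LiesOnAntichain s k a
  le : ∀ b ∈ s, c b = j → LiesOnAntichain s k b → b ≤ a

namespace IsChainColoring

variable {s t : Finset α} {k : ℕ} {c : α → ℕ}

theorem isChain (hc : IsChainColoring s k c) (hts : t ⊆ s) {j : ℕ} (ht : ∀ a ∈ t, c a = j) :
    IsChain (· ≤ ·) (t : Set α) :=
  fun a ha b hb _ => hc.2 a (hts ha) b (hts hb) ((ht a ha).trans (ht b hb).symm)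

theorem exists_mem_color_eq (hc : IsChainColoring s k c) (hts : t ⊆ s)
    (ht : IsAntichain (· ≤ ·) (t : Set α)) (htk : #t = k) {j : ℕ} (hj : j < k) :
    ∃ a ∈ t, c a = j := by
  classical
  have hinj : Set.InjOn c t := fun a ha b hb hab => by_contra fun hne =>
    (hc.2 a (hts ha) b (hts hb) hab).elim (ht ha hb hne) (ht hb ha (Ne.symm hne))
  have himage : t.image c = range k := by
    refine eq_of_subset_of_card_le (fun j hj => ?_)
      (by rw [card_range, card_image_of_injOn hinj, htk])
    obtain ⟨a, ha, rfl⟩ := mem_image.1 hj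
    exact mem_range.2 (hc.1 a (hts ha))
  exact mem_image.1 (himage ▸ mem_range.2 hj)

theorem extend [DecidableEq α] (hc : IsChainColoring (s \ t) k c)
    (ht : IsChain (· ≤ ·) (t : Set α)) :
    IsChainColoring s (k + 1) (fun a => if a ∈ t then k else c a) := by
  have hlt : ∀ a ∈ s, a ∉ t → c a < k := fun a ha hat => hc.1 a (mem_sdiff.2 ⟨ha, hat⟩)
  refine ⟨fun a ha => ?_, fun a ha b hb hab => ?_⟩
  · dsimp only
    split_ifs with hat
    · exact k.lt_succ_self
    · exact (hlt a ha hat).trans k.lt_succ_self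
  · by_cases hat : a ∈ t <;> by_cases hbt : b ∈ t <;> simp only [hat, hbt, if_true, if_false] at hab
    · exact ht.total hat hbt
    · exact absurd hab (hlt b hb hbt).ne'
    · exact absurd hab (hlt a ha hat).ne
    · exact hc.2 a (mem_sdiff.2 ⟨ha, hat⟩) b (mem_sdiff.2 ⟨hb, hbt⟩) hab

theorem exists_top (hc : IsChainColoring s k c)
    (hs : ∃ t ⊆ s, IsAntichain (· ≤ ·) (t : Set α) ∧ #t = k) {j : ℕ} (hj : j < k) :
    ∃ a, IsColorTop s k c j a := by
  classical
  obtain ⟨t, hts, ht, htk⟩ := hs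
  obtain ⟨a, hat, hac⟩ := hc.exists_mem_color_eq hts ht htk hj
  have hchain := hc.isChain (t := {b ∈ s | c b = j ∧ LiesOnAntichain s k b})
    (filter_subset _ _) fun b hb => (mem_filter.1 hb).2.1
  obtain ⟨a', ha', hgreatest⟩ := exists_greatest_of_isChain
    ⟨a, mem_filter.2 ⟨hts hat, hac, t, hts, ht, htk, hat⟩⟩ hchain
  obtain ⟨ha's, ha'c, ha'anti⟩ := mem_filter.1 ha'
  exact ⟨a', ha's, ha'c, ha'anti, fun b hb hbc hbanti =>
    hgreatest b (mem_filter.2 ⟨hb, hbc, hbanti⟩)⟩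

theorem color_eq_of_top_le (hc : IsChainColoring s k c) {a b : α} {i : ℕ} (hi : i < k)
    (htop : IsColorTop s k c i a) (hb : LiesOnAntichain s k b) (hab : a ≤ b) : c b = i := by
  obtain ⟨t, hts, ht, htk, hbt⟩ := hb
  obtain ⟨x, hxt, hxc⟩ := hc.exists_mem_color_eq hts ht htk hi
  have hxb : x = b := by_contra fun hne =>
    ht hxt hbt hne ((htop.le x (hts hxt) hxc ⟨t, hts, ht, htk, hxt⟩).trans hab)
  rw [← hxb, hxc]

theorem exists_chain_of_top_le [DecidableEq α] (hc : IsChainColoring s k c) {a top : α} {j : ℕ}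
    (hj : j < k) (htop : IsColorTop s k c j top) (hta : top ≤ a) :
    ∃ C ⊆ insert a s, a ∈ C ∧ IsChain (· ≤ ·) (C : Set α) ∧
      ∀ t ⊆ insert a s \ C, IsAntichain (· ≤ ·) (t : Set α) → #t < k := by
  classical
  refine ⟨insert a {x ∈ s | c x = j ∧ x ≤ top}, insert_subset_insert a (filter_subset _ _),
    mem_insert_self a _, ?_, fun t hts ht => ?_⟩
  · rw [coe_insert]
    refine (hc.isChain (filter_subset _ _) fun x hx => (mem_filter.1 hx).2.1).insert
      fun x hx _ => Or.inr ?_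
    exact (mem_filter.1 hx).2.2.trans hta
  · have hts' : t ⊆ s := fun x hx => by
      obtain ⟨hxs, hxC⟩ := mem_sdiff.1 (hts hx)
      exact (mem_insert.1 hxs).resolve_left fun h => hxC (h.symm ▸ mem_insert_self a _)
    by_contra! hkt
    obtain ⟨u, hut, huk⟩ := exists_subset_card_eq hkt
    have hu : IsAntichain (· ≤ ·) (u : Set α) := ht.subset (coe_subset.2 hut)
    obtain ⟨x, hxu, hxj⟩ := hc.exists_mem_color_eq (hut.trans hts') hu huk hj
    have hxtop := htop.le x (hts' (hut hxu)) hxj ⟨u, hut.trans hts', hu, huk, hxu⟩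
    exact (mem_sdiff.1 (hts (hut hxu))).2
      (mem_insert_of_mem (mem_filter.2 ⟨hts' (hut hxu), hxj, hxtop⟩))

theorem isAntichain_insert_image_top [DecidableEq α] (hc : IsChainColoring s k c) {a : α}
    (has : a ∉ s) {top : ℕ → α} (htop : ∀ j < k, IsColorTop s k c j (top j))
    (hinc : ∀ j < k, ¬top j ≤ a ∧ ¬a ≤ top j) :
    IsAntichain (· ≤ ·) ((insert a ((range k).image top) : Finset α) : Set α) ∧
      #(insert a ((range k).image top)) = k + 1 := by
  have hinj : Set.InjOn top (range k) := fun i hi j hj hij => by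
    rw [← (htop i (mem_range.1 hi)).color, ← (htop j (mem_range.1 hj)).color, hij]
  have hanti : IsAntichain (· ≤ ·) (((range k).image top : Finset α) : Set α) := by
    simp only [coe_image, coe_range]
    rintro _ ⟨i, hi, rfl⟩ _ ⟨j, hj, rfl⟩ hne hle
    have hji : j = i := by
      rw [← hc.color_eq_of_top_le hi (htop i hi) (htop j hj).liesOn hle, (htop j hj).color]
    exact hne (congrArg top hji.symm)
  refine ⟨?_, ?_⟩
  · have hinc' : ∀ b ∈ (range k).image top, ¬b ≤ a ∧ ¬a ≤ b := by
      simpa only [forall_mem_image, mem_range] using hinc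
    rw [coe_insert]
    exact hanti.insert (fun b hb _ => (hinc' b hb).1) (fun b hb _ => (hinc' b hb).2)
  · rw [card_insert_of_notMem fun ha => ?_, card_image_of_injOn hinj, card_range]
    obtain ⟨j, hj, rfl⟩ := mem_image.1 ha
    exact has (htop j (mem_range.1 hj)).mem

end IsChainColoring

/-- Dilworth's theorem, by Galvin's induction. -/
theorem exists_isChainColoring_of_forall_card_le (s : Finset α) (k : ℕ)
    (h : ∀ t ⊆ s, IsAntichain (· ≤ ·) (t : Set α) → #t ≤ k) : ∃ c, IsChainColoring s k c := by
  classical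
  induction s using Finset.strongInduction generalizing k with
  | H s ih =>
  rcases s.eq_empty_or_nonempty with rfl | hs
  · exact ⟨fun _ => 0, by simp [IsChainColoring]⟩
  obtain ⟨a, ha⟩ := s.exists_maximal hs
  obtain ⟨k, rfl⟩ : ∃ k', k = k' + 1 := ⟨k - 1, by
    have := h {a} (singleton_subset_iff.2 ha.prop) (by simp)
    rw [card_singleton] at this
    omega⟩
  have herase : s.erase a ⊆ s := erase_subset a s
  by_cases hwide : ∃ t ⊆ s.erase a, IsAntichain (· ≤ ·) (t : Set α) ∧ #t = k + 1
  · obtain ⟨c, hc⟩ := ih _ (erase_ssubset ha.prop) (k + 1) fun t ht => h t (ht.trans herase)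
    have : Nonempty α := ⟨a⟩
    choose! top htop using fun j (hj : j < k + 1) => hc.exists_top hwide hj
    by_cases hbelow : ∃ j < k + 1, top j ≤ a
    · obtain ⟨j, hj, hja⟩ := hbelow
      obtain ⟨C, hCs, haC, hC, hCk⟩ := hc.exists_chain_of_top_le hj (htop j hj) hja
      rw [insert_erase ha.prop] at hCs hCk
      obtain ⟨c', hc'⟩ := ih (s \ C) (sdiff_ssubset hCs ⟨a, haC⟩) k fun t hts ht =>
        Nat.lt_succ_iff.1 (hCk t hts ht)
      exact ⟨_, hc'.extend hC⟩
    · push Not at hbelow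
      have hinc : ∀ j < k + 1, ¬top j ≤ a ∧ ¬a ≤ top j := fun j hj =>
        ⟨hbelow j hj, fun hle => (mem_erase.1 (htop j hj).mem).1
          (ha.eq_of_le (herase (htop j hj).mem) hle).symm⟩
      obtain ⟨hanti, hcard⟩ := hc.isAntichain_insert_image_top (notMem_erase a s) htop hinc
      have := h _ (insert_subset ha.prop fun x hx => by
        obtain ⟨j, hj, rfl⟩ := mem_image.1 hx
        exact herase (htop j (mem_range.1 hj)).mem) hanti
      omega
  · push Not at hwide
    obtain ⟨c, hc⟩ := ih _ (erase_ssubset ha.prop) k fun t hts ht =>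
      Nat.lt_succ_iff.1 ((h t (hts.trans herase) ht).lt_of_ne (hwide t hts ht))
    rw [← sdiff_singleton_eq_erase] at hc
    exact ⟨_, hc.extend (by simp)⟩

end Dilworth

section Saturated

variable {n m k : ℕ} {F : Finset (Finset (Fin n))}

theorem AntichainCopy.compls (h : AntichainCopy m F) : AntichainCopy m Fᶜˢ := by
  obtain ⟨G, hGF, hGm, hG⟩ := h
  exact ⟨Gᶜˢ, compls_subset_compls.2 hGF, by rw [card_compls, hGm], by
    rw [coe_compls]; exact IsAntichain.image_compl hG⟩

namespace ASaturated

theorem compls (hF : ASaturated m F) : ASaturated m Fᶜˢ := by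
  refine ⟨fun h => hF.1 (by simpa using h.compls), fun S hS => ?_⟩
  have hcompls : (insert Sᶜ F)ᶜˢ = insert S Fᶜˢ := by ext; simp
  exact hcompls ▸ (hF.2 Sᶜ (by simpa using hS)).compls

theorem card_le_of_isAntichain (hF : ASaturated (k + 1) F) {G : Finset (Finset (Fin n))}
    (hGF : G ⊆ F) (hG : IsAntichain (· ⊆ ·) (G : Set (Finset (Fin n)))) : #G ≤ k := by
  by_contra! hkG
  obtain ⟨G', hG'G, hG'k⟩ := exists_subset_card_eq hkG
  exact hF.1 ⟨G', hG'G.trans hGF, hG'k, hG.subset (coe_subset.2 hG'G)⟩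

theorem exists_isAntichain_incomparable (hF : ASaturated (k + 1) F) {X : Finset (Fin n)}
    (hX : X ∉ F) : ∃ G ⊆ F, #G = k ∧ IsAntichain (· ⊆ ·) (G : Set (Finset (Fin n))) ∧
      ∀ W ∈ G, ¬W ⊆ X ∧ ¬X ⊆ W := by
  obtain ⟨G, hGF, hGk, hG⟩ := hF.2 X hX
  have hXG : X ∈ G := by
    by_contra hXG
    have := hF.card_le_of_isAntichain (fun W hW => (mem_insert.1 (hGF hW)).resolve_left
      (ne_of_mem_of_not_mem hW hXG)) hG
    omega
  refine ⟨G.erase X, fun W hW => ?_, by rw [card_erase_of_mem hXG, hGk]; rfl,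
    hG.subset (coe_subset.2 (erase_subset X G)), fun W hW => ?_⟩
  · exact (mem_insert.1 (hGF (mem_of_mem_erase hW))).resolve_left (ne_of_mem_erase hW)
  · exact ⟨hG (mem_of_mem_erase hW) hXG (ne_of_mem_erase hW),
      hG hXG (mem_of_mem_erase hW) (ne_of_mem_erase hW).symm⟩

theorem empty_mem (hF : ASaturated (k + 1) F) (hk : 0 < k) : ∅ ∈ F := by
  by_contra h
  obtain ⟨G, -, hGk, -, hG⟩ := hF.exists_isAntichain_incomparable h
  obtain ⟨W, hW⟩ := card_pos.1 (hGk ▸ hk)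
  exact (hG W hW).2 (empty_subset W)

theorem univ_mem (hF : ASaturated (k + 1) F) (hk : 0 < k) : univ ∈ F := by
  by_contra h
  obtain ⟨G, -, hGk, -, hG⟩ := hF.exists_isAntichain_incomparable h
  obtain ⟨W, hW⟩ := card_pos.1 (hGk ▸ hk)
  exact (hG W hW).1 (subset_univ W)


variable {c : Finset (Fin n) → ℕ} {i j : ℕ} {A B : Finset (Fin n)}

theorem mem_of_forall_comparable (hF : ASaturated (k + 1) F) (hc : IsChainColoring F k c)
    (hj : j < k) {S : Finset (Fin n)} (hS : ∀ W ∈ F, c W = j → W ⊆ S ∨ S ⊆ W) : S ∈ F := by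
  by_contra hSF
  obtain ⟨G, hGF, hGk, hG, hinc⟩ := hF.exists_isAntichain_incomparable hSF
  obtain ⟨W, hWG, hWj⟩ := hc.exists_mem_color_eq hGF hG hGk hj
  exact (hS W (hGF hWG) hWj).elim (hinc W hWG).1 (hinc W hWG).2

theorem exists_incomparable_pair (hF : ASaturated (k + 1) F) (hc : IsChainColoring F k c)
    {X : Finset (Fin n)} (hX : X ∉ F) {j' : ℕ} (hj : j < k) (hj' : j' < k) (hjj' : j ≠ j') :
    ∃ W ∈ F, ∃ W' ∈ F, c W = j ∧ c W' = j' ∧ ¬W ⊆ X ∧ ¬X ⊆ W' ∧ ¬W' ⊆ W := by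
  obtain ⟨G, hGF, hGk, hG, hinc⟩ := hF.exists_isAntichain_incomparable hX
  obtain ⟨W, hWG, hWj⟩ := hc.exists_mem_color_eq hGF hG hGk hj
  obtain ⟨W', hW'G, hW'j⟩ := hc.exists_mem_color_eq hGF hG hGk hj'
  exact ⟨W, hGF hWG, W', hGF hW'G, hWj, hW'j, (hinc W hWG).1, (hinc W' hW'G).2,
    hG hW'G hWG fun h => hjj' (by rw [← hWj, ← hW'j, h])⟩

theorem exists_gap (hF : ASaturated (k + 1) F) (hc : IsChainColoring F k c) (hj : j < k)
    (hi : 0 < i) (hin : i < n) (hmiss : ∀ W ∈ F, c W = j → #W ≠ i) :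
    ∃ s t : Finset (Fin n), s ⊆ t ∧ #s < i ∧ i < #t ∧ (∀ W ∈ F, c W = j → W ⊆ s ∨ t ⊆ W) ∧
      (Icc s t) # i ⊆ F := by
  set L := {W ∈ F | c W = j ∧ #W < i}
  set U := {W ∈ F | c W = j ∧ i < #W}
  have hL : IsChain (· ≤ ·) (L : Set (Finset (Fin n))) :=
    hc.isChain (filter_subset _ _) fun W hW => (mem_filter.1 hW).2.1
  have hU : IsChain (· ≤ ·) (U : Set (Finset (Fin n))) :=
    hc.isChain (filter_subset _ _) fun W hW => (mem_filter.1 hW).2.1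
  have hsplit : ∀ W ∈ F, c W = j → W ⊆ L.sup id ∨ U.inf id ⊆ W := fun W hW hWj =>
    (Nat.lt_or_gt_of_ne (hmiss W hW hWj)).imp
      (fun h => le_sup (f := id) (mem_filter.2 ⟨hW, hWj, h⟩))
      (fun h => inf_le (f := id) (mem_filter.2 ⟨hW, hWj, h⟩))
  refine ⟨L.sup id, U.inf id, Finset.sup_le fun V hV => Finset.le_inf fun W hW => ?_, ?_, ?_,
    hsplit, fun S hS => ?_⟩
  · obtain ⟨hVF, hVj, hVi⟩ := mem_filter.1 hV
    obtain ⟨hWF, hWj, hWi⟩ := mem_filter.1 hW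
    exact (hc.2 V hVF W hWF (hVj.trans hWj.symm)).resolve_right fun h =>
      (card_le_card h).not_gt (hVi.trans hWi)
  · rcases L.eq_empty_or_nonempty with hLe | hLne
    · simpa [hLe]
    · exact (mem_filter.1 (hL.supClosed.finsetSup_mem hLne fun W hW => hW)).2.2
  · rcases U.eq_empty_or_nonempty with hUe | hUne
    · simpa [hUe]
    · exact (mem_filter.1 (hU.infClosed.finsetInf_mem hUne fun W hW => hW)).2.2
  · obtain ⟨hsS, hSt⟩ := mem_Icc.1 (mem_slice.1 hS).1
    exact hF.mem_of_forall_comparable hc hj fun W hW hWj =>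
      (hsplit W hW hWj).imp (·.trans hsS) hSt.trans

theorem subset_inter_or_union_subset (hF : ASaturated (k + 1) F) (hc : IsChainColoring F k c)
    (hlev : F # i = {A, B}) (hAB : A ≠ B) (hi : 0 < i) (hin : i < n) (hj : j < k)
    (hmiss : ∀ W ∈ F, c W = j → #W ≠ i) :
    (∀ W ∈ F, c W = j → W ⊆ A ∩ B ∨ A ∪ B ⊆ W) ∧ #(A ∪ B) = i + 1 := by
  obtain ⟨s, t, hst, hs, ht, hclass, hslice⟩ := hF.exists_gap hc hj hi hin hmiss
  have hsub : (Icc s t) # i ⊆ {A, B} := hlev ▸ fun S hS =>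
    mem_slice.2 ⟨hslice hS, (mem_slice.1 hS).2⟩
  obtain ⟨rfl, rfl, hcard⟩ := eq_inter_and_eq_union_of_slice_Icc_subset_pair hst hs ht hAB hsub
  exact ⟨hclass, hcard⟩

theorem union_subset_of_color_ne (hF : ASaturated (k + 1) F) (hc : IsChainColoring F k c)
    (hlev : F # i = {A, B}) (hAB : A ≠ B) (hi : 0 < i) (hin : i < n) {T : Finset (Fin n)}
    (hT : T ∈ F) (hAT : A ⊆ T) (hTA : c T ≠ c A) : A ∪ B ⊆ T := by
  have hA := mem_slice.1 (hlev ▸ mem_insert_self A {B})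
  have hB := mem_slice.1 (hlev ▸ mem_insert_of_mem (mem_singleton_self B))
  have hAB' : ¬A ⊆ B := fun h => hAB (eq_of_subset_of_card_le h (by omega))
  by_cases hTB : c T = c B
  · refine union_subset hAT ((hc.2 B hB.1 T hT hTB.symm).resolve_right fun h => hAB' ?_)
    exact hAT.trans h
  · have hmiss : ∀ W ∈ F, c W = c T → #W ≠ i := fun W hW hWT hWi => by
      have : W = A ∨ W = B := by simpa [hlev] using mem_slice.2 ⟨hW, hWi⟩
      rcases this with rfl | rfl
      exacts [hTA hWT.symm, hTB hWT.symm]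
    refine ((hF.subset_inter_or_union_subset hc hlev hAB hi hin (hc.1 T hT) hmiss).1 T hT rfl
      ).resolve_left fun h => hAB' ?_
    exact hAT.trans (h.trans inter_subset_right)

theorem exists_next_in_chain (hF : ASaturated (k + 1) F) (hc : IsChainColoring F k c)
    (hlev : F # i = {A, B}) (hAB : A ≠ B) (hunion : #(A ∪ B) = i + 1) (hi : 0 < i)
    (hin : i + 2 ≤ n) : ∃ E ∈ F, c E = c A ∧ #E = i + 1 ∧ A ⊆ E := by
  by_contra! hno
  have hA := mem_slice.1 (hlev ▸ mem_insert_self A {B})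
  have hmiss : ∀ W ∈ F, c W = c A → #W ≠ i + 1 := fun W hW hWA hWi =>
    (hc.2 A hA.1 W hW hWA.symm).elim (hno W hW hWA hWi) fun h => by
      have := card_le_card h; omega
  obtain ⟨s, t, hst, hs, ht, hclass, hslice⟩ :=
    hF.exists_gap hc (hc.1 A hA.1) (by omega) (by omega) hmiss
  have hAs : A ⊆ s := (hclass A hA.1 rfl).resolve_right fun h => by
    have := card_le_card h; omega
  have heq : ∀ T ∈ (Icc s t) # (i + 1), T = A ∪ B := fun T hT => by
    obtain ⟨hTst, hTi⟩ := mem_slice.1 hT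
    have hTA : c T ≠ c A := fun h => hmiss T (hslice hT) h hTi
    exact (eq_of_subset_of_card_le (hF.union_subset_of_color_ne hc hlev hAB hi (by omega)
      (hslice hT) (hAs.trans (mem_Icc.1 hTst).1) hTA) (by omega)).symm
  obtain ⟨T₁, hT₁, T₂, hT₂, hne⟩ := one_lt_card.1
    ((by omega : 1 < #t - #s).trans_le (card_sub_card_le_card_slice_Icc hst hs ht))
  exact hne ((heq T₁ hT₁).trans (heq T₂ hT₂).symm)

theorem eq_union_of_next_in_chain (hF : ASaturated (k + 1) F) (hc : IsChainColoring F k c)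
    (hlev : F # i = {A, B}) (hAB : A ≠ B) (hunion : #(A ∪ B) = i + 1) (hi : 0 < i) (hin : i < n)
    (hj : j < k) (hmiss : ∀ W ∈ F, c W = j → #W ≠ i) {E : Finset (Fin n)} (hE : E ∈ F)
    (hEA : c E = c A) (hEi : #E = i + 1) (hAE : A ⊆ E) : E = A ∪ B := by
  by_contra hne
  have hA := mem_slice.1 (hlev ▸ mem_insert_self A {B})
  have hB := mem_slice.1 (hlev ▸ mem_insert_of_mem (mem_singleton_self B))
  obtain ⟨p, hpE, hpAB⟩ := not_subset.1 fun h : E ⊆ A ∪ B =>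
    hne (eq_of_subset_of_card_le h (by omega))
  have hpAB' : p ∉ A ∩ B := fun h => hpAB (mem_union_left B (mem_inter.1 h).1)
  have hXF : insert p (A ∩ B) ∉ F := fun hX => by
    have := card_union_add_card_inter A B
    have : insert p (A ∩ B) = A ∨ insert p (A ∩ B) = B := by
      simpa [hlev] using (mem_slice (r := i)).2 ⟨hX, by rw [card_insert_of_notMem hpAB']; omega⟩
    rcases this with h | h
    exacts [hpAB (mem_union_left B (h ▸ mem_insert_self p _)),
      hpAB (mem_union_right A (h ▸ mem_insert_self p _))]
  obtain ⟨W, hW, W', hW', hWj, hW'A, hWX, hXW', hW'W⟩ := hF.exists_incomparable_pair hc hXF hj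
    (hc.1 A hA.1) fun h => hmiss A hA.1 h.symm hA.2
  have hABW : A ∪ B ⊆ W :=
    ((hF.subset_inter_or_union_subset hc hlev hAB hi hin hj hmiss).1 W hW hWj).resolve_left
      fun h => hWX (h.trans (subset_insert p _))
  have hAW' : A ⊆ W' := (hc.2 A hA.1 W' hW' hW'A.symm).resolve_right fun h =>
    hW'W (h.trans (subset_union_left.trans hABW))
  have hXE : insert p (A ∩ B) ⊆ E := insert_subset hpE (inter_subset_left.trans hAE)
  rcases hc.2 E hE W' hW' (hEA.trans hW'A.symm) with hEW' | hW'E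
  · exact hXW' (hXE.trans hEW')
  · rcases eq_or_ne W' E with rfl | hne'
    · exact hXW' hXE
    · have := card_lt_card (ssubset_of_subset_of_ne hW'E hne')
      have hW'A : W' = A := (eq_of_subset_of_card_le hAW' (by omega)).symm
      exact hW'W (hW'A ▸ subset_union_left.trans hABW)

theorem three_le_card_slice (hF : ASaturated (k + 1) F) (hk : 3 ≤ k) (hi : 0 < i)
    (hin : i + 2 ≤ n) : 3 ≤ #(F # i) := by
  classical
  by_contra! hlt
  obtain ⟨c, hc⟩ := exists_isChainColoring_of_forall_card_le F k fun G hGF hG =>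
    hF.card_le_of_isAntichain hGF hG
  obtain ⟨j, hj, hjF⟩ := exists_mem_notMem_of_card_lt_card (s := (F # i).image c)
    (t := range k) (by rw [card_range]; exact card_image_le.trans_lt (by omega))
  have hmiss : ∀ W ∈ F, c W = j → #W ≠ i := fun W hW hWj hWi =>
    hjF (mem_image.2 ⟨W, mem_slice.2 ⟨hW, hWi⟩, hWj⟩)
  obtain ⟨s, t, hst, hs, ht, -, hslice⟩ := hF.exists_gap hc (mem_range.1 hj) hi (by omega) hmiss
  obtain ⟨A, hA, B, hB, hAB⟩ := one_lt_card.1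
    ((by omega : 1 < #t - #s).trans_le (card_sub_card_le_card_slice_Icc hst hs ht))
  have hlevel : ∀ {S}, S ∈ (Icc s t) # i → S ∈ F # i := fun hS =>
    mem_slice.2 ⟨hslice hS, (mem_slice.1 hS).2⟩
  have hlev : F # i = {A, B} := (eq_of_subset_of_card_le
    (insert_subset (hlevel hA) (singleton_subset_iff.2 (hlevel hB)))
    (by rw [card_pair hAB]; omega)).symm
  have hunion := (hF.subset_inter_or_union_subset hc hlev hAB hi (by omega) (mem_range.1 hj)
    hmiss).2
  have hnext : ∀ {A B}, F # i = {A, B} → A ≠ B → #(A ∪ B) = i + 1 → c A = c (A ∪ B) :=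
    fun hlev hAB hunion => by
      obtain ⟨E, hE, hEA, hEi, hAE⟩ := hF.exists_next_in_chain hc hlev hAB hunion hi hin
      rw [← hEA, hF.eq_union_of_next_in_chain hc hlev hAB hunion hi (by omega) (mem_range.1 hj)
        hmiss hE hEA hEi hAE]
  have hcAB : c A = c B := by
    rw [hnext hlev hAB hunion, union_comm,
      hnext (hlev.trans (pair_comm A B)) hAB.symm (union_comm A B ▸ hunion)]
  have hA := mem_slice.1 (hlevel hA)
  have hB := mem_slice.1 (hlevel hB)
  rcases hc.2 A hA.1 B hB.1 hcAB with h | h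
  exacts [hAB (eq_of_subset_of_card_le h (by omega)),
    hAB (eq_of_subset_of_card_le h (by omega)).symm]

end ASaturated

end Saturated

/-- For `n > k ≥ 3`, every induced-`A_{k+1}`-saturated family in `B_n` has size
at least `3n - 1`. -/
theorem stmt8 {n k : ℕ} (hk : 3 ≤ k) (hn : k < n)
    (F : Finset (Finset (Fin n))) (hF : ASaturated (k + 1) F) :
    3 * n - 1 ≤ F.card := by
  obtain ⟨m, rfl⟩ : ∃ m, n = m + 2 := ⟨n - 2, by omega⟩
  have hmiddle : ∀ r ∈ range (m + 1), 3 ≤ #(F # (r + 1)) := fun r hr => by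
    rcases Nat.lt_or_ge r m with hrm | hrm
    · exact hF.three_le_card_slice hk r.succ_pos (by omega)
    · have := hF.compls.three_le_card_slice hk one_pos (by omega)
      rwa [compls_slice F (by simp), card_compls, Fintype.card_fin,
        show m + 2 - 1 = r + 1 by have := mem_range.1 hr; omega] at this
  have hbot : 1 ≤ #(F # 0) := card_pos.2 ⟨∅, mem_slice.2 ⟨hF.empty_mem (by omega), card_empty⟩⟩
  have htop : 1 ≤ #(F # (m + 2)) := card_pos.2 ⟨univ, mem_slice.2 ⟨hF.univ_mem (by omega), by simp⟩⟩
  have hsum := sum_card_slice F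
  rw [Fintype.card_fin, ← Nat.range_succ_eq_Iic, sum_range_succ, sum_range_succ'] at hsum
  have := sum_le_sum hmiddle
  rw [sum_const, card_range, smul_eq_mul] at this
  omega
end

section
/- For n ≥ 3, the family F = {{i} : i ∈ [n]} ∪ {{1,...,i} : i ∈ [n]} ∪ {∅} is induced-N-saturated in B_n; hence isat(n, N) ≤ 2n. -/
/-!
Inside the family, a set having a nonempty proper subset in the family is an initial segment
`Iic b`, and initial segments form a chain; so the two maximal elements `B`, `D` of an induced `N`
cannot be incomparable. A set `S` outside the family is nonempty, not a singleton and not an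
initial segment, so it contains `a < b < c` with `c ∈ S` and exactly one of `a`, `b` in `S`.
Then `{c} ⊂ S ⊃ {a} ⊂ Iic b` (if `b ∉ S`) or `{a} ⊂ Iic b ⊃ {b} ⊂ S` (if `a ∉ S`) is an induced `N`.
-/

/-- `X` and `Y` are incomparable under inclusion. -/
def Incomp {n : ℕ} (X Y : Finset (Fin n)) : Prop :=
  ¬ X ⊆ Y ∧ ¬ Y ⊆ X

/-- `F` contains an induced copy of the poset `N` (elements `A, B, C, D` with
`A < B`, `C < B`, `C < D` and all other pairs incomparable). -/
def NCopy {n : ℕ} (F : Finset (Finset (Fin n))) : Prop :=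
  ∃ A ∈ F, ∃ B ∈ F, ∃ C ∈ F, ∃ D ∈ F,
    A ⊂ B ∧ C ⊂ B ∧ C ⊂ D ∧ Incomp A C ∧ Incomp A D ∧ Incomp B D

/-- `F` is induced-`N`-saturated in `B_n`. -/
def NSaturated {n : ℕ} (F : Finset (Finset (Fin n))) : Prop :=
  ¬ NCopy F ∧ ∀ S ∉ F, NCopy (insert S F)

open Finset

namespace Finset

variable {α : Type*} [LinearOrder α] [LocallyFiniteOrderBot α]

theorem exists_lt_lt_of_ne_Iic {s : Finset α} (hs : s.Nonempty) (hsingleton : ∀ a, s ≠ {a})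
    (hIic : ∀ a, s ≠ Iic a) :
    ∃ a b c, a < b ∧ b < c ∧ c ∈ s ∧ (a ∈ s ∧ b ∉ s ∨ a ∉ s ∧ b ∈ s) := by
  set m := s.max' hs
  have hm : m ∈ s := s.max'_mem hs
  obtain ⟨k, hkm, hks⟩ : ∃ k ∈ Iic m, k ∉ s :=
    not_subset.1 fun h => hIic m (Subset.antisymm (fun x hx => mem_Iic.2 (s.le_max' x hx)) h)
  have hkm : k < m := lt_of_le_of_ne (mem_Iic.1 hkm) (ne_of_mem_of_not_mem hm hks).symm
  by_cases hbelow : ∃ a ∈ s, a < k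
  · obtain ⟨a, has, hak⟩ := hbelow
    exact ⟨a, k, m, hak, hkm, hm, Or.inl ⟨has, hks⟩⟩
  · push Not at hbelow
    obtain ⟨b, hbs, hbm⟩ := (hs.exists_eq_singleton_or_nontrivial.resolve_left
      fun ⟨a, h⟩ => hsingleton a h).exists_ne m
    have hkb : k < b := lt_of_le_of_ne (hbelow b hbs) (ne_of_mem_of_not_mem hbs hks).symm
    exact ⟨k, b, m, hkb, lt_of_le_of_ne (s.le_max' b hbs) hbm, hm, Or.inr ⟨hks, hbs⟩⟩

end Finset

theorem Incomp.of_mem {n : ℕ} {X Y : Finset (Fin n)} {x y : Fin n} (hxX : x ∈ X) (hxY : x ∉ Y)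
    (hyY : y ∈ Y) (hyX : y ∉ X) : Incomp X Y :=
  ⟨fun h => hxY (h hxX), fun h => hyX (h hyY)⟩

theorem Incomp.nonempty_left {n : ℕ} {X Y : Finset (Fin n)} (h : Incomp X Y) : X.Nonempty :=
  nonempty_iff_ne_empty.2 fun hX => h.1 (hX ▸ empty_subset Y)

theorem Incomp.nonempty_right {n : ℕ} {X Y : Finset (Fin n)} (h : Incomp X Y) : Y.Nonempty :=
  nonempty_iff_ne_empty.2 fun hY => h.2 (hY ▸ empty_subset X)

section NCopy

variable {n : ℕ} {F : Finset (Finset (Fin n))} {S : Finset (Fin n)} {a b c : Fin n}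

theorem ncopy_of_mem_of_notMem_of_mem (hab : a < b) (hbc : b < c) (ha : a ∈ S) (hb : b ∉ S)
    (hc : c ∈ S) (hSF : S ∈ F) (haF : {a} ∈ F) (hcF : {c} ∈ F) (hIicF : Iic b ∈ F) :
    NCopy F := by
  have hac := hab.trans hbc
  refine ⟨{c}, hcF, S, hSF, {a}, haF, Iic b, hIicF, ?_, ?_, ?_, ?_, ?_, ?_⟩
  · exact (ssubset_iff_of_subset (singleton_subset_iff.2 hc)).2 ⟨a, ha, by simpa using hac.ne⟩
  · exact (ssubset_iff_of_subset (singleton_subset_iff.2 ha)).2 ⟨c, hc, by simpa using hac.ne'⟩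
  · exact (ssubset_iff_of_subset (by simpa using hab.le)).2 ⟨b, by simp, by simpa using hab.ne'⟩
  · exact Incomp.of_mem (mem_singleton_self c) (by simpa using hac.ne') (mem_singleton_self a)
      (by simpa using hac.ne)
  · exact Incomp.of_mem (mem_singleton_self c) (by simpa using hbc) (by simpa using hab.le)
      (by simpa using hac.ne)
  · exact Incomp.of_mem hc (by simpa using hbc) (by simp) hb

theorem ncopy_of_notMem_of_mem_of_mem (hab : a < b) (hbc : b < c) (ha : a ∉ S) (hb : b ∈ S)
    (hc : c ∈ S) (hSF : S ∈ F) (haF : {a} ∈ F) (hbF : {b} ∈ F) (hIicF : Iic b ∈ F) :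
    NCopy F := by
  refine ⟨{a}, haF, Iic b, hIicF, {b}, hbF, S, hSF, ?_, ?_, ?_, ?_, ?_, ?_⟩
  · exact (ssubset_iff_of_subset (by simpa using hab.le)).2 ⟨b, by simp, by simpa using hab.ne'⟩
  · exact (ssubset_iff_of_subset (by simp)).2 ⟨a, by simpa using hab.le, by simpa using hab.ne⟩
  · exact (ssubset_iff_of_subset (singleton_subset_iff.2 hb)).2 ⟨c, hc, by simpa using hbc.ne'⟩
  · exact Incomp.of_mem (mem_singleton_self a) (by simpa using hab.ne) (mem_singleton_self b)
      (by simpa using hab.ne')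
  · exact Incomp.of_mem (mem_singleton_self a) ha hb (by simpa using hab.ne')
  · exact Incomp.of_mem (by simpa using hab.le) ha hc (by simpa using hbc)

end NCopy

def singletonIicFamily (n : ℕ) : Finset (Finset (Fin n)) :=
  (univ.image fun i : Fin n => ({i} : Finset (Fin n))) ∪ (univ.image fun i : Fin n => Iic i) ∪ {∅}

namespace singletonIicFamily

variable {n : ℕ}

theorem mem_iff {X : Finset (Fin n)} :
    X ∈ singletonIicFamily n ↔ (∃ i, X = {i}) ∨ (∃ i, X = Iic i) ∨ X = ∅ := by
  simp only [singletonIicFamily, mem_union, mem_image, mem_univ, true_and, mem_singleton, eq_comm,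
    or_assoc]

theorem singleton_mem (i : Fin n) : {i} ∈ singletonIicFamily n :=
  mem_iff.2 (Or.inl ⟨i, rfl⟩)

theorem Iic_mem (i : Fin n) : Iic i ∈ singletonIicFamily n :=
  mem_iff.2 (Or.inr (Or.inl ⟨i, rfl⟩))

theorem exists_eq_Iic_of_ssubset {A B : Finset (Fin n)} (hB : B ∈ singletonIicFamily n)
    (hAB : A ⊂ B) (hA : A.Nonempty) : ∃ b, B = Iic b := by
  obtain ⟨i, rfl⟩ | hIic | rfl := mem_iff.1 hB
  · exact absurd (ssubset_singleton_iff.1 hAB) hA.ne_empty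
  · exact hIic
  · exact absurd hAB (not_ssubset_empty A)

/-- `B` and `D` would have to be two incomparable initial segments. -/
theorem not_ncopy : ¬ NCopy (singletonIicFamily n) := by
  rintro ⟨A, -, B, hB, C, -, D, hD, hAB, -, hCD, hAC, -, hBD⟩
  obtain ⟨b, rfl⟩ := exists_eq_Iic_of_ssubset hB hAB hAC.nonempty_left
  obtain ⟨d, rfl⟩ := exists_eq_Iic_of_ssubset hD hCD hAC.nonempty_right
  rcases le_total b d with hbd | hdb
  · exact hBD.1 (Iic_subset_Iic.2 hbd)
  · exact hBD.2 (Iic_subset_Iic.2 hdb)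

theorem ncopy_insert {S : Finset (Fin n)} (hS : S ∉ singletonIicFamily n) :
    NCopy (insert S (singletonIicFamily n)) := by
  simp only [mem_iff, not_or, not_exists] at hS
  obtain ⟨hsingleton, hIic, hempty⟩ := hS
  have hF := subset_insert S (singletonIicFamily n)
  obtain ⟨a, b, c, hab, hbc, hc, ⟨ha, hb⟩ | ⟨ha, hb⟩⟩ :=
    exists_lt_lt_of_ne_Iic (nonempty_iff_ne_empty.2 hempty) hsingleton hIic
  · exact ncopy_of_mem_of_notMem_of_mem hab hbc ha hb hc (mem_insert_self S _)
      (hF (singleton_mem a)) (hF (singleton_mem c)) (hF (Iic_mem b))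
  · exact ncopy_of_notMem_of_mem_of_mem hab hbc ha hb hc (mem_insert_self S _)
      (hF (singleton_mem a)) (hF (singleton_mem b)) (hF (Iic_mem b))

theorem nSaturated : NSaturated (singletonIicFamily n) :=
  ⟨not_ncopy, fun _ => ncopy_insert⟩

/-- The singleton and the initial segment at the least element coincide. -/
theorem card_le (hn : 0 < n) : (singletonIicFamily n).card ≤ 2 * n := by
  set singletons := univ.image fun i : Fin n => ({i} : Finset (Fin n))
  set segments := univ.image fun i : Fin n => Iic i
  have h0 : ({⟨0, hn⟩} : Finset (Fin n)) ∈ singletons ∩ segments := by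
    refine mem_inter.2 ⟨mem_image_of_mem _ (mem_univ _), mem_image.2 ⟨⟨0, hn⟩, mem_univ _, ?_⟩⟩
    ext x
    simp [Fin.le_def, Fin.ext_iff]
  have hsingletons : singletons.card ≤ n := card_image_le.trans (by simp)
  have hsegments : segments.card ≤ n := card_image_le.trans (by simp)
  have hunion := card_union_add_card_inter singletons segments
  have hinter : 0 < (singletons ∩ segments).card := card_pos.2 ⟨_, h0⟩
  calc (singletons ∪ segments ∪ {∅}).card
      ≤ (singletons ∪ segments).card + 1 := card_union_le _ _
    _ ≤ 2 * n := by omega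

end singletonIicFamily

/-- For `n ≥ 3`, the family of all singletons together with all initial
segments `{1, …, i}` and `∅` is induced-`N`-saturated; hence `isat(n, N) ≤ 2n`. -/
theorem stmt10 {n : ℕ} (hn : 3 ≤ n) :
    NSaturated ((Finset.univ.image fun i : Fin n => ({i} : Finset (Fin n))) ∪
        (Finset.univ.image fun i : Fin n => Finset.Iic i) ∪ {∅}) ∧
    sInf {m | ∃ F : Finset (Finset (Fin n)), NSaturated F ∧ F.card = m} ≤ 2 * n := by
  have hsat : NSaturated (singletonIicFamily n) := singletonIicFamily.nSaturated
  refine ⟨hsat, ?_⟩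
  calc sInf {m | ∃ F : Finset (Finset (Fin n)), NSaturated F ∧ F.card = m}
      ≤ (singletonIicFamily n).card := Nat.sInf_le ⟨_, hsat, rfl⟩
    _ ≤ 2 * n := singletonIicFamily.card_le (by omega)
end

section
/- For n ≥ 3, the family F = {∅} ∪ {{i} : i ∈ [n]} ∪ {{i,j} : i ≠ j ∈ [n]} ∪ {{1,...,i} : 3 ≤ i ≤ n} is induced-butterfly-saturated in B_n; hence isat(n, ⋈) ≤ C(n,2) + 2n - 1. -/
/-- `F` contains an induced copy of the butterfly poset `⋈` (elements
`A, B, C, D` with `A < B`, `A < D`, `C < B`, `C < D`, `A ∥ C`, `B ∥ D`). -/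
def BowtieCopy {n : ℕ} (F : Finset (Finset (Fin n))) : Prop :=
  ∃ A ∈ F, ∃ B ∈ F, ∃ C ∈ F, ∃ D ∈ F,
    A ⊂ B ∧ A ⊂ D ∧ C ⊂ B ∧ C ⊂ D ∧ Incomp A C ∧ Incomp B D

/-- `F` is induced-`⋈`-saturated in `B_n`. -/
def BowtieSaturated {n : ℕ} (F : Finset (Finset (Fin n))) : Prop :=
  ¬ BowtieCopy F ∧ ∀ S ∉ F, BowtieCopy (insert S F)

open Finset

lemma exists_pair_incomp_Iic {α : Type*} [LinearOrder α] [LocallyFiniteOrderBot α]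
    {S : Finset α} (hcard : 2 < #S) (hIic : ∀ k, S ≠ Iic k) :
    ∃ a ∈ S, ∃ b ∈ S, a ≠ b ∧ ∃ k, a ≤ k ∧ b ≤ k ∧ ¬ S ⊆ Iic k ∧ ¬ Iic k ⊆ S := by
  have hne : S.Nonempty := card_pos.mp (by omega)
  set t := S.max' hne
  have ht : t ∈ S := S.max'_mem hne
  obtain ⟨j, hjt, hjS⟩ := exists_of_ssubset <|
    ssubset_of_subset_of_ne (fun x hx => mem_Iic.mpr (S.le_max' x hx)) (hIic t)
  replace hjt : j < t := (mem_Iic.mp hjt).lt_of_ne (by rintro rfl; exact hjS ht)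
  obtain ⟨a, ha, b, hb, hab⟩ := one_lt_card.mp <| by
    rw [card_erase_of_mem ht]; omega
  have hat : a < t := (S.le_max' a (mem_of_mem_erase ha)).lt_of_ne (ne_of_mem_erase ha)
  have hbt : b < t := (S.le_max' b (mem_of_mem_erase hb)).lt_of_ne (ne_of_mem_erase hb)
  refine ⟨a, mem_of_mem_erase ha, b, mem_of_mem_erase hb, hab, max j (max a b),
    by simp, by simp, fun h => ?_, fun h => hjS (h (by simp))⟩
  exact (mem_Iic.mp (h ht)).not_gt (max_lt hjt (max_lt hat hbt))

lemma not_bowtieCopy_of_isChain {n : ℕ} {F : Finset (Finset (Fin n))}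
    (hF : ∀ a c : Fin n, a ≠ c → IsChain (· ⊆ ·) {X | X ∈ F ∧ a ∈ X ∧ c ∈ X}) :
    ¬ BowtieCopy F := by
  rintro ⟨A, -, B, hB, C, -, D, hD, hAB, hAD, hCB, hCD, ⟨hAC, hCA⟩, hBD, hDB⟩
  obtain ⟨a, haA, haC⟩ := not_subset.mp hAC
  obtain ⟨c, hcC, hcA⟩ := not_subset.mp hCA
  have hac : a ≠ c := by rintro rfl; exact haC hcC
  have hne : B ≠ D := by rintro rfl; exact hBD subset_rfl
  rcases hF a c hac ⟨hB, hAB.subset haA, hCB.subset hcC⟩ ⟨hD, hAD.subset haA, hCD.subset hcC⟩ hne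
    with h | h
  exacts [hBD h, hDB h]

lemma bowtieCopy_of_singletons {n : ℕ} {F : Finset (Finset (Fin n))} {a b : Fin n}
    {X Y : Finset (Fin n)}
    (ha : {a} ∈ F) (hb : {b} ∈ F) (hX : X ∈ F) (hY : Y ∈ F) (hab : a ≠ b)
    (haX : a ∈ X) (hbX : b ∈ X) (haY : a ∈ Y) (hbY : b ∈ Y) (hXY : Incomp X Y) :
    BowtieCopy F := by
  have hsub : ∀ {x y : Fin n} {Z : Finset (Fin n)}, x ≠ y → x ∈ Z → y ∈ Z → {x} ⊂ Z :=
    fun hxy hx hy => (ssubset_iff_of_subset (singleton_subset_iff.mpr hx)).mpr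
      ⟨_, hy, by simpa using hxy.symm⟩
  exact ⟨{a}, ha, X, hX, {b}, hb, Y, hY, hsub hab haX hbX, hsub hab haY hbY, hsub hab.symm hbX haX,
    hsub hab.symm hbY haY, by simpa [Incomp] using ⟨hab, hab.symm⟩, hXY⟩

def bowtieSaturatedFamily (n : ℕ) : Finset (Finset (Fin n)) :=
  ({∅} : Finset (Finset (Fin n))) ∪
    (univ.image fun i : Fin n => ({i} : Finset (Fin n))) ∪
    (((univ ×ˢ univ).filter fun p : Fin n × Fin n => p.1 ≠ p.2).image
      fun p => ({p.1, p.2} : Finset (Fin n))) ∪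
    ((univ.filter fun i : Fin n => 2 ≤ (i : ℕ)).image fun i => Iic i)

lemma mem_bowtieSaturatedFamily {n : ℕ} {X : Finset (Fin n)} :
    X ∈ bowtieSaturatedFamily n ↔ #X ≤ 2 ∨ ∃ k, X = Iic k := by
  simp only [bowtieSaturatedFamily, mem_union, mem_singleton, mem_image, mem_filter, mem_univ,
    true_and, mem_product, Prod.exists]
  have small : #X ≤ 2 → (X = ∅ ∨ ∃ i, {i} = X) ∨ ∃ a b, a ≠ b ∧ {a, b} = X := by
    intro hX
    interval_cases h : #X
    · exact .inl (.inl (card_eq_zero.mp h))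
    · obtain ⟨i, rfl⟩ := card_eq_one.mp h
      exact .inl (.inr ⟨i, rfl⟩)
    · obtain ⟨a, b, hab, rfl⟩ := card_eq_two.mp h
      exact .inr ⟨a, b, hab, rfl⟩
  constructor
  · rintro (((rfl | ⟨i, rfl⟩) | ⟨a, b, hab, rfl⟩) | ⟨k, -, rfl⟩)
    · simp
    · simp
    · simp [card_pair hab]
    · exact .inr ⟨k, rfl⟩
  · rintro (hX | ⟨k, rfl⟩)
    · exact .inl (small hX)
    · by_cases hk : 2 ≤ (k : ℕ)
      · exact .inr ⟨k, hk, rfl⟩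
      · exact .inl (small (by rw [Fin.card_Iic]; omega))

lemma not_bowtieCopy_bowtieSaturatedFamily (n : ℕ) :
    ¬ BowtieCopy (bowtieSaturatedFamily n) := by
  refine not_bowtieCopy_of_isChain fun a c hac X ⟨hX, haX, hcX⟩ Y ⟨hY, haY, hcY⟩ _ => ?_
  have hpair : ∀ {Z : Finset (Fin n)}, a ∈ Z → c ∈ Z → #Z ≤ 2 → Z = {a, c} := fun ha hc hZ =>
    (eq_of_subset_of_card_le (insert_subset ha (singleton_subset_iff.mpr hc))
      (by rw [card_pair hac]; exact hZ)).symm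
  rcases mem_bowtieSaturatedFamily.mp hX with hX | ⟨k, rfl⟩
  · exact .inl (hpair haX hcX hX ▸ insert_subset haY (singleton_subset_iff.mpr hcY))
  rcases mem_bowtieSaturatedFamily.mp hY with hY | ⟨l, rfl⟩
  · exact .inr (hpair haY hcY hY ▸ insert_subset haX (singleton_subset_iff.mpr hcX))
  exact (le_total k l).imp Iic_subset_Iic.mpr Iic_subset_Iic.mpr

lemma bowtieCopy_insert_of_notMem {n : ℕ} {S : Finset (Fin n)}
    (hS : S ∉ bowtieSaturatedFamily n) : BowtieCopy (insert S (bowtieSaturatedFamily n)) := by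
  simp only [mem_bowtieSaturatedFamily, not_or, not_le, not_exists] at hS
  obtain ⟨a, haS, b, hbS, hab, k, hak, hbk, hSk, hkS⟩ := exists_pair_incomp_Iic hS.1 hS.2
  have mem : ∀ {X}, #X ≤ 2 ∨ (∃ k, X = Iic k) → X ∈ insert S (bowtieSaturatedFamily n) :=
    fun h => mem_insert_of_mem (mem_bowtieSaturatedFamily.mpr h)
  exact bowtieCopy_of_singletons (mem (by simp)) (mem (by simp)) (mem_insert_self _ _)
    (mem (.inr ⟨k, rfl⟩)) hab haS hbS (mem_Iic.mpr hak) (mem_Iic.mpr hbk) ⟨hSk, hkS⟩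

lemma card_bowtieSaturatedFamily_le {n : ℕ} (hn : 3 ≤ n) :
    #(bowtieSaturatedFamily n) ≤ n.choose 2 + 2 * n - 1 := by
  have singletons : #(univ.image fun i : Fin n => ({i} : Finset (Fin n))) ≤ n :=
    card_image_le.trans (by simp)
  have pairs : #((((univ ×ˢ univ).filter fun p : Fin n × Fin n => p.1 ≠ p.2).image
      fun p => ({p.1, p.2} : Finset (Fin n)))) ≤ n.choose 2 := by
    refine (card_le_card fun X hX => ?_).trans
      (by rw [card_powersetCard 2 (univ : Finset (Fin n)), card_univ, Fintype.card_fin])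
    obtain ⟨p, hp, rfl⟩ := mem_image.mp hX
    exact mem_powersetCard.mpr ⟨subset_univ _, card_pair (mem_filter.mp hp).2⟩
  have segments : #((univ.filter fun i : Fin n => 2 ≤ (i : ℕ)).image fun i => Iic i) ≤ n - 2 := by
    refine card_image_le.trans ?_
    have := card_filter_add_card_filter_not (s := (univ : Finset (Fin n))) (fun i => (i : ℕ) < 2)
    simp only [Fin.card_filter_val_lt, not_lt, card_univ, Fintype.card_fin] at this
    omega
  calc #(bowtieSaturatedFamily n) ≤ 1 + n + n.choose 2 + (n - 2) := by
        unfold bowtieSaturatedFamily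
        grw [card_union_le, card_union_le, card_union_le, card_singleton, singletons, pairs,
          segments]
    _ = n.choose 2 + 2 * n - 1 := by omega

/-- For `n ≥ 3`, the family consisting of `∅`, all singletons, all pairs, and
all initial segments `{1, …, i}` with `i ≥ 3` is induced-butterfly-saturated;
hence `isat(n, ⋈) ≤ C(n,2) + 2n - 1`. -/
theorem stmt11 {n : ℕ} (hn : 3 ≤ n) :
    BowtieSaturated (({∅} : Finset (Finset (Fin n))) ∪
        (Finset.univ.image fun i : Fin n => ({i} : Finset (Fin n))) ∪
        (((Finset.univ ×ˢ Finset.univ).filter fun p : Fin n × Fin n => p.1 ≠ p.2).image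
          fun p => ({p.1, p.2} : Finset (Fin n))) ∪
        ((Finset.univ.filter fun i : Fin n => 2 ≤ (i : ℕ)).image
          fun i => Finset.Iic i)) ∧
    sInf {m | ∃ F : Finset (Finset (Fin n)), BowtieSaturated F ∧ F.card = m}
      ≤ n.choose 2 + 2 * n - 1 := by
  have hsat : BowtieSaturated (bowtieSaturatedFamily n) :=
    ⟨not_bowtieCopy_bowtieSaturatedFamily n, fun _ => bowtieCopy_insert_of_notMem⟩
  refine ⟨hsat, le_trans (Nat.sInf_le ?_) (card_bowtieSaturatedFamily_le hn)⟩
  exact ⟨bowtieSaturatedFamily n, hsat, rfl⟩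
end

section
/- Let n ≥ 2 and let F be an induced-D₂-saturated family in B_n with ∅ ∈ F. Then |F| ≥ n + 1. -/
/-- `F` contains an induced copy of the diamond `D₂`: four sets `A, B, C, D`
with `A ⊂ B ⊂ D`, `A ⊂ C ⊂ D` and `B, C` incomparable. -/
def D2Copy {n : ℕ} (F : Finset (Finset (Fin n))) : Prop :=
  ∃ A ∈ F, ∃ B ∈ F, ∃ C ∈ F, ∃ D ∈ F,
    A ⊂ B ∧ B ⊂ D ∧ A ⊂ C ∧ C ⊂ D ∧ Incomp B C

/-- `F` is induced-`D₂`-saturated in `B_n`. -/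
def D2Saturated {n : ℕ} (F : Finset (Finset (Fin n))) : Prop :=
  ¬ D2Copy F ∧ ∀ S ∉ F, D2Copy (insert S F)

namespace D2Aux

variable {n : ℕ} {F : Finset (Finset (Fin n))}

lemma empty_ssub {B C : Finset (Fin n)} (h : ¬ B ⊆ C) : (∅ : Finset (Fin n)) ⊂ B :=
  Finset.ssubset_iff_subset_ne.mpr
    ⟨Finset.empty_subset _, fun e => h (e ▸ Finset.empty_subset C)⟩

/-- Any two members of `F` below a common member of `F` are comparable. -/
lemma chainlem (hfree : ¬ D2Copy F) (h0 : (∅ : Finset (Fin n)) ∈ F)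
    {W B C : Finset (Fin n)} (hW : W ∈ F) (hB : B ∈ F) (hC : C ∈ F)
    (hBW : B ⊆ W) (hCW : C ⊆ W) : B ⊆ C ∨ C ⊆ B := by
  by_contra h
  push_neg at h
  obtain ⟨h1, h2⟩ := h
  apply hfree
  refine ⟨∅, h0, B, hB, C, hC, W, hW, empty_ssub h1, ?_, empty_ssub h2, ?_, h1, h2⟩
  · exact Finset.ssubset_iff_subset_ne.mpr ⟨hBW, fun e => h2 (e ▸ hCW)⟩
  · exact Finset.ssubset_iff_subset_ne.mpr ⟨hCW, fun e => h1 (e ▸ hBW)⟩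

/-- Role analysis: a forced diamond with a new set `S` uses `S` as a middle
element or as the top. -/
lemma role_lemma (hfree : ¬ D2Copy F) (h0 : (∅ : Finset (Fin n)) ∈ F)
    {S : Finset (Fin n)} (hS : S ∉ F) (hd : D2Copy (insert S F)) :
    (∃ B ∈ F, ∃ C ∈ F, B ⊂ S ∧ C ⊂ S ∧ ¬ B ⊆ C ∧ ¬ C ⊆ B) ∨
    (∃ C ∈ F, ∃ D ∈ F, S ⊂ D ∧ C ⊂ D ∧ ¬ S ⊆ C ∧ ¬ C ⊆ S) := by
  obtain ⟨A, hA, B, hB, C, hC, D, hD, hAB, hBD, hAC, hCD, hBC⟩ := hd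
  obtain ⟨h1, h2⟩ := hBC
  rcases Finset.mem_insert.1 hA with rfl | hA
  · -- A = S is impossible: it gives a diamond in F with bottom ∅
    have hBF : B ∈ F := by
      rcases Finset.mem_insert.1 hB with rfl | h
      · exact absurd hAB (ssubset_irrefl _)
      · exact h
    have hCF : C ∈ F := by
      rcases Finset.mem_insert.1 hC with rfl | h
      · exact absurd hAC (ssubset_irrefl _)
      · exact h
    have hDF : D ∈ F := by
      rcases Finset.mem_insert.1 hD with rfl | h
      · exact absurd (hAB.trans hBD) (ssubset_irrefl _)
      · exact h
    exact absurd ⟨∅, h0, B, hBF, C, hCF, D, hDF, empty_ssub h1, hBD,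
      empty_ssub h2, hCD, h1, h2⟩ hfree
  · rcases Finset.mem_insert.1 hB with rfl | hBF
    · have hCF : C ∈ F := by
        rcases Finset.mem_insert.1 hC with rfl | h
        · exact absurd (subset_refl _) h1
        · exact h
      have hDF : D ∈ F := by
        rcases Finset.mem_insert.1 hD with rfl | h
        · exact absurd hBD (ssubset_irrefl _)
        · exact h
      exact Or.inr ⟨C, hCF, D, hDF, hBD, hCD, h1, h2⟩
    · rcases Finset.mem_insert.1 hC with rfl | hCF
      · have hDF : D ∈ F := by
          rcases Finset.mem_insert.1 hD with rfl | h
          · exact absurd hCD (ssubset_irrefl _)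
          · exact h
        exact Or.inr ⟨B, hBF, D, hDF, hCD, hBD, h2, h1⟩
      · rcases Finset.mem_insert.1 hD with rfl | hDF
        · exact Or.inl ⟨B, hBF, C, hCF, hBD, hCD, h1, h2⟩
        · exact absurd ⟨A, hA, B, hBF, C, hCF, D, hDF, hAB, hBD, hAC, hCD, h1, h2⟩ hfree

/-- Every point of the ground set lies in some member of `F`. -/
lemma mem_of (hfree : ¬ D2Copy F) (hsat : ∀ S ∉ F, D2Copy (insert S F))
    (h0 : (∅ : Finset (Fin n)) ∈ F) (x : Fin n) : ∃ Y ∈ F, x ∈ Y := by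
  by_cases hx : ({x} : Finset (Fin n)) ∈ F
  · exact ⟨{x}, hx, Finset.mem_singleton_self x⟩
  rcases role_lemma hfree h0 hx (hsat _ hx) with
    ⟨B, hB, C, hC, hBS, hCS, h1, h2⟩ | ⟨C, hC, D, hD, hSD, hCD, h1, h2⟩
  · rw [Finset.ssubset_singleton_iff] at hBS hCS
    subst hBS; subst hCS
    exact absurd (subset_refl _) h1
  · exact ⟨D, hD, hSD.subset (Finset.mem_singleton_self x)⟩

/-- The union of all proper `F`-subsets of `Y` (the "parent" of `Y`). -/
def pfun (F : Finset (Finset (Fin n))) (Y : Finset (Fin n)) : Finset (Fin n) :=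
  (F.filter (fun T => T ⊂ Y)).sup id

lemma mem_pfun {Y : Finset (Fin n)} {a : Fin n} :
    a ∈ pfun F Y ↔ ∃ T ∈ F, T ⊂ Y ∧ a ∈ T := by
  simp only [pfun, Finset.mem_sup, Finset.mem_filter, id_eq]
  exact ⟨fun ⟨v, ⟨hv1, hv2⟩, hv3⟩ => ⟨v, hv1, hv2, hv3⟩,
    fun ⟨v, hv1, hv2, hv3⟩ => ⟨v, ⟨hv1, hv2⟩, hv3⟩⟩

lemma subset_pfun {T Y : Finset (Fin n)} (hT : T ∈ F) (h : T ⊂ Y) :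
    T ⊆ pfun F Y := fun a ha => mem_pfun.2 ⟨T, hT, h, ha⟩

lemma pfun_subset {Y : Finset (Fin n)} : pfun F Y ⊆ Y :=
  Finset.sup_le fun T hT => (Finset.mem_filter.1 hT).2.subset

lemma pfun_mem (hfree : ¬ D2Copy F) (h0 : (∅ : Finset (Fin n)) ∈ F)
    {Y : Finset (Fin n)} (hY : Y ∈ F) (hune : (∅ : Finset (Fin n)) ⊂ Y) :
    pfun F Y ∈ F := by
  classical
  have hs : (F.filter (fun T => T ⊂ Y)).Nonempty :=
    ⟨∅, Finset.mem_filter.2 ⟨h0, hune⟩⟩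
  obtain ⟨M, hM, hmax⟩ := Finset.exists_max_image _ Finset.card hs
  have hM' := Finset.mem_filter.1 hM
  have hall : ∀ T ∈ F.filter (fun T => T ⊂ Y), T ⊆ M := by
    intro T hT
    have hT' := Finset.mem_filter.1 hT
    rcases chainlem hfree h0 hY hT'.1 hM'.1 hT'.2.subset hM'.2.subset with h | h
    · exact h
    · exact le_of_eq (Finset.eq_of_subset_of_card_le h (hmax T hT)).symm
  have h1 : pfun F Y = M := by
    apply le_antisymm
    · exact Finset.sup_le hall
    · intro a ha
      exact mem_pfun.2 ⟨M, hM'.1, hM'.2, ha⟩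
  rw [h1]; exact hM'.1

/-- Key lemma: for every `x` there is `Y ∈ F` with `Y \ pfun F Y = {x}`. -/
lemma good (hfree : ¬ D2Copy F) (hsat : ∀ S ∉ F, D2Copy (insert S F))
    (h0 : (∅ : Finset (Fin n)) ∈ F) (x : Fin n) :
    ∃ Y ∈ F, x ∈ Y ∧ x ∉ pfun F Y ∧ Y ⊆ pfun F Y ∪ {x} := by
  classical
  set Q := F.filter (fun Y => x ∈ Y ∧ x ∉ pfun F Y) with hQdef
  have hQne : Q.Nonempty := by
    obtain ⟨Y₀, hY₀, hmin⟩ := Finset.exists_min_image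
      (F.filter (fun Y => x ∈ Y)) Finset.card
      (by
        obtain ⟨Y, hY, hxY⟩ := mem_of hfree hsat h0 x
        exact ⟨Y, Finset.mem_filter.2 ⟨hY, hxY⟩⟩)
    have h1 := Finset.mem_filter.1 hY₀
    refine ⟨Y₀, Finset.mem_filter.2 ⟨h1.1, h1.2, ?_⟩⟩
    intro hmem
    obtain ⟨T, hTF, hTY, hxT⟩ := mem_pfun.1 hmem
    have hle : Y₀.card ≤ T.card := hmin T (Finset.mem_filter.2 ⟨hTF, hxT⟩)
    exact absurd (Finset.card_lt_card hTY) (not_lt.2 hle)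
  obtain ⟨Y, hYQ, hmax⟩ := Finset.exists_max_image Q (fun Y => (pfun F Y).card) hQne
  have hYQ' := Finset.mem_filter.1 hYQ
  obtain ⟨hYF, hxY, hxP⟩ : Y ∈ F ∧ x ∈ Y ∧ x ∉ pfun F Y :=
    ⟨hYQ'.1, hYQ'.2.1, hYQ'.2.2⟩
  refine ⟨Y, hYF, hxY, hxP, ?_⟩
  by_contra hns
  set P := pfun F Y with hPdef
  set S := P ∪ {x} with hSdef
  have hPY : P ⊆ Y := pfun_subset
  have hSsub : S ⊆ Y := Finset.union_subset hPY (Finset.singleton_subset_iff.2 hxY)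
  have hSY : S ⊂ Y := by
    rw [Finset.ssubset_def]; exact ⟨hSsub, hns⟩
  have hxS : x ∈ S := Finset.mem_union_right _ (Finset.mem_singleton_self x)
  have hSF : S ∉ F := fun h => hxP (subset_pfun h hSY hxS)
  rcases role_lemma hfree h0 hSF (hsat S hSF) with
    ⟨B, hB, C, hC, hBS, hCS, h1, h2⟩ | ⟨C, hC, D, hD, hSD, hCD, h1, h2⟩
  · rcases chainlem hfree h0 hYF hB hC (hBS.subset.trans hSsub)
      (hCS.subset.trans hSsub) with h | h
    exacts [h1 h, h2 h]
  · have hPS : P ⊆ S := Finset.subset_union_left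
    have hCY : ¬ C ⊆ Y := by
      intro h
      rcases eq_or_ne C Y with rfl | hne
      · exact h1 hSsub
      · exact h2 ((subset_pfun hC (Finset.ssubset_iff_subset_ne.mpr ⟨h, hne⟩)).trans hPS)
    have hYD : ¬ Y ⊆ D := by
      intro h
      rcases chainlem hfree h0 hD hC hYF hCD.subset h with h' | h'
      · exact hCY h'
      · exact h1 (hSsub.trans h')
    have hxD : x ∈ D := hSD.subset hxS
    obtain ⟨Y', hY'm, hmin⟩ := Finset.exists_min_image
      (F.filter (fun T => T ⊆ D ∧ x ∈ T)) Finset.card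
      ⟨D, Finset.mem_filter.2 ⟨hD, subset_refl _, hxD⟩⟩
    have hY'm' := Finset.mem_filter.1 hY'm
    obtain ⟨hY'F, hY'D, hxY'⟩ : Y' ∈ F ∧ Y' ⊆ D ∧ x ∈ Y' :=
      ⟨hY'm'.1, hY'm'.2.1, hY'm'.2.2⟩
    have hxP' : x ∉ pfun F Y' := by
      intro hm
      obtain ⟨T, hTF, hTY', hxT⟩ := mem_pfun.1 hm
      have hle : Y'.card ≤ T.card :=
        hmin T (Finset.mem_filter.2 ⟨hTF, hTY'.subset.trans hY'D, hxT⟩)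
      exact absurd (Finset.card_lt_card hTY') (not_lt.2 hle)
    have hY'Q : Y' ∈ Q := Finset.mem_filter.2 ⟨hY'F, hxY', hxP'⟩
    have hle : (pfun F Y').card ≤ (pfun F Y).card := hmax Y' hY'Q
    have hYne : (∅ : Finset (Fin n)) ⊂ Y := Finset.ssubset_iff_subset_ne.mpr
      ⟨Finset.empty_subset _, fun e => by
        rw [← e] at hxY; exact absurd hxY (Finset.notMem_empty x)⟩
    have hPF : P ∈ F := pfun_mem hfree h0 hYF hYne
    have hPD : P ⊆ D := hPS.trans hSD.subset
    have hPY' : P ⊆ Y' := by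
      rcases chainlem hfree h0 hD hPF hY'F hPD hY'D with h | h
      · exact h
      · exact absurd (h hxY') hxP
    have hPneY' : P ≠ Y' := fun e => hxP (e ▸ hxY')
    have hPpY' : P ⊆ pfun F Y' :=
      subset_pfun hPF (Finset.ssubset_iff_subset_ne.mpr ⟨hPY', hPneY'⟩)
    have hSY' : S ⊆ Y' := Finset.union_subset hPY' (Finset.singleton_subset_iff.2 hxY')
    have hCpY' : C ⊆ pfun F Y' := by
      rcases chainlem hfree h0 hD hC hY'F hCD.subset hY'D with h | h
      · exact subset_pfun hC (Finset.ssubset_iff_subset_ne.mpr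
          ⟨h, fun e => h1 (by rw [e]; exact hSY')⟩)
      · exact absurd (hSY'.trans h) h1
    have hne : P ≠ pfun F Y' := by
      intro e
      apply h2
      rw [← e] at hCpY'
      exact hCpY'.trans hPS
    have hlt : P.card < (pfun F Y').card :=
      Finset.card_lt_card (Finset.ssubset_iff_subset_ne.mpr ⟨hPpY', hne⟩)
    exact absurd hle (not_le.2 hlt)

end D2Aux

/-- If `n ≥ 2` and `F` is an induced-`D₂`-saturated family in `B_n` containing
`∅`, then `|F| ≥ n + 1`. -/
theorem stmt12 {n : ℕ} (hn : 2 ≤ n) (F : Finset (Finset (Fin n)))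
    (hF : D2Saturated F) (h0 : ∅ ∈ F) :
    n + 1 ≤ F.card := by
  classical
  obtain ⟨hfree, hsat⟩ := hF
  have hg : ∀ x : Fin n, ∃ Y, Y ∈ F ∧ x ∈ Y ∧ x ∉ D2Aux.pfun F Y ∧
      Y ⊆ D2Aux.pfun F Y ∪ {x} := by
    intro x
    obtain ⟨Y, hY, h⟩ := D2Aux.good hfree hsat h0 x
    exact ⟨Y, hY, h⟩
  choose f hf1 hf2 hf3 hf4 using hg
  have hinj : Function.Injective f := by
    intro a b e
    have hab : a ∈ D2Aux.pfun F (f b) ∪ {b} := hf4 b (e ▸ hf2 a)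
    rcases Finset.mem_union.1 hab with h | h
    · rw [← e] at h; exact absurd h (hf3 a)
    · exact Finset.mem_singleton.1 h
  have hmaps : ∀ x : Fin n, x ∈ (Finset.univ : Finset (Fin n)) → f x ∈ F.erase ∅ := by
    intro x _
    refine Finset.mem_erase.2 ⟨?_, hf1 x⟩
    intro e
    have hx := hf2 x
    rw [e] at hx
    exact absurd hx (Finset.notMem_empty x)
  have hcard : (Finset.univ : Finset (Fin n)).card ≤ (F.erase ∅).card :=
    Finset.card_le_card_of_injOn f hmaps (hinj.injOn)
  have huniv : (Finset.univ : Finset (Fin n)).card = n := Finset.card_fin n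
  have herase : (F.erase ∅).card + 1 = F.card := Finset.card_erase_add_one h0
  omega
end

section
/- For n ≥ 2, every induced-Λ₂-saturated family in B_n is also induced-D₂-saturated in B_n and contains ∅; consequently isat(n, Λ₂) ≥ n + 1. -/
/-- `F` contains an induced copy of `Λ₂`: a set above two incomparable sets. -/
def L2Copy {n : ℕ} (F : Finset (Finset (Fin n))) : Prop :=
  ∃ a ∈ F, ∃ b ∈ F, ∃ c ∈ F, a ⊂ c ∧ b ⊂ c ∧ Incomp a b

/-- `F` is induced-`Λ₂`-saturated in `B_n`. -/
def L2Saturated {n : ℕ} (F : Finset (Finset (Fin n))) : Prop :=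
  ¬ L2Copy F ∧ ∀ S ∉ F, L2Copy (insert S F)

open Finset

section

variable {n : ℕ} {F : Finset (Finset (Fin n))} {a b c s : Finset (Fin n)}

theorem Incomp.symm (h : Incomp a b) : Incomp b a :=
  ⟨h.2, h.1⟩

theorem Incomp.nonempty_left_s13 (h : Incomp a b) : a.Nonempty :=
  nonempty_iff_ne_empty.2 fun ha => h.1 (ha ▸ empty_subset b)

theorem subset_or_subset_of_not_l2Copy (hF : ¬ L2Copy F) (ha : a ∈ F) (hb : b ∈ F) (hc : c ∈ F)
    (hac : a ⊂ c) (hbc : b ⊂ c) : a ⊆ b ∨ b ⊆ a := by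
  by_contra! h
  exact hF ⟨a, ha, b, hb, c, hc, hac, hbc, h⟩

theorem L2Copy.insert_cases (h : L2Copy (insert s F)) (hF : ¬ L2Copy F) :
    (∃ a ∈ F, ∃ b ∈ F, a ⊂ s ∧ b ⊂ s ∧ Incomp a b) ∨
      (∃ b ∈ F, ∃ c ∈ F, s ⊂ c ∧ b ⊂ c ∧ Incomp s b) := by
  obtain ⟨a, ha, b, hb, c, hc, hac, hbc, hab⟩ := h
  rcases mem_insert.1 hc with rfl | hcF
  · exact .inl ⟨a, (mem_insert.1 ha).resolve_left hac.ne, b, (mem_insert.1 hb).resolve_left hbc.ne,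
      hac, hbc, hab⟩
  rcases mem_insert.1 ha with rfl | haF
  · exact .inr ⟨b, (mem_insert.1 hb).resolve_left fun h => hab.1 h.ge, c, hcF, hac, hbc, hab⟩
  rcases mem_insert.1 hb with rfl | hbF
  · exact .inr ⟨a, haF, c, hcF, hbc, hac, hab.symm⟩
  exact (hF ⟨a, haF, b, hbF, c, hcF, hac, hbc, hab⟩).elim

theorem D2Copy.l2Copy (h : D2Copy F) : L2Copy F := by
  obtain ⟨-, -, b, hb, c, hc, d, hd, -, hbd, -, hcd, hbc⟩ := h
  exact ⟨b, hb, c, hc, d, hd, hbd, hcd, hbc⟩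

theorem L2Copy.d2Copy (h : L2Copy F) (h₀ : ∅ ∈ F) : D2Copy F := by
  obtain ⟨a, ha, b, hb, c, hc, hac, hbc, hab⟩ := h
  exact ⟨∅, h₀, a, ha, b, hb, c, hc, empty_ssubset.2 hab.nonempty_left_s13, hac,
    empty_ssubset.2 hab.symm.nonempty_left_s13, hbc, hab⟩

theorem eq_of_insert_eq_insert_of_not_l2Copy (hF : ¬ L2Copy F) {x y : Fin n}
    {u v : Finset (Fin n)} (hu : u ∈ F) (hv : v ∈ F) (he : insert x u ∈ F) (hxu : x ∉ u)
    (hyv : y ∉ v) (h : insert x u = insert y v) : x = y := by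
  by_contra hxy
  have hyu : y ∈ u := (mem_insert.1 (h ▸ mem_insert_self y v)).resolve_left (Ne.symm hxy)
  have hxv : x ∈ v := (mem_insert.1 (h ▸ mem_insert_self x u)).resolve_left hxy
  exact hF ⟨u, hu, v, hv, insert x u, he, ssubset_insert hxu, h ▸ ssubset_insert hyv,
    fun huv => hyv (huv hyu), fun hvu => hxu (hvu hxv)⟩

namespace L2Saturated

theorem empty_mem (hF : L2Saturated F) : ∅ ∈ F := by
  by_contra h
  rcases (hF.2 ∅ h).insert_cases hF.1 with ⟨a, -, -, -, ha, -⟩ | ⟨b, -, -, -, -, -, hb⟩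
  · exact not_ssubset_empty a ha
  · exact hb.1 (empty_subset b)

theorem d2Saturated (hF : L2Saturated F) : D2Saturated F :=
  ⟨fun h => hF.1 h.l2Copy, fun S hS => (hF.2 S hS).d2Copy (mem_insert_of_mem hF.empty_mem)⟩

theorem exists_mem_mem (hF : L2Saturated F) (x : Fin n) : ∃ c ∈ F, x ∈ c := by
  by_cases hx : {x} ∈ F
  · exact ⟨{x}, hx, mem_singleton_self x⟩
  rcases (hF.2 {x} hx).insert_cases hF.1 with ⟨a, -, b, -, ha, hb, hab⟩ | ⟨-, -, c, hc, hxc, -⟩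
  · rw [ssubset_singleton_iff] at ha hb
    exact (hab.1 (ha ▸ hb ▸ subset_rfl)).elim
  · exact ⟨c, hc, hxc.subset (mem_singleton_self x)⟩

theorem exists_insert_mem (hF : L2Saturated F) (x : Fin n) :
    ∃ u ∈ F, x ∉ u ∧ insert x u ∈ F := by
  by_contra! hx
  let T : Set (Finset (Fin n)) := {u | u ∈ F ∧ x ∉ u ∧ ∃ c ∈ F, x ∈ c ∧ u ⊂ c}
  have hT : T.Nonempty := by
    obtain ⟨c, hc, hxc⟩ := hF.exists_mem_mem x
    exact ⟨∅, hF.empty_mem, notMem_empty x, c, hc, hxc, empty_ssubset.2 ⟨x, hxc⟩⟩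
  obtain ⟨u, hmax⟩ := T.toFinite.exists_maximal hT
  obtain ⟨hu, hxu, c, hc, hxc, huc⟩ := hmax.prop
  rcases (hF.2 _ (hx u hu hxu)).insert_cases hF.1 with
    ⟨a, ha, b, hb, has, hbs, hab⟩ | ⟨b, hb, d, hd, hsd, hbd, hsb⟩
  · have hsc : insert x u ⊆ c := insert_subset hxc huc.subset
    rcases subset_or_subset_of_not_l2Copy hF.1 ha hb hc
      (has.trans_subset hsc) (hbs.trans_subset hsc) with h | h
    exacts [hab.1 h, hab.2 h]
  · have hud : u ⊂ d := (ssubset_insert hxu).trans hsd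
    have hub : u ⊂ b := by
      rcases subset_or_subset_of_not_l2Copy hF.1 hu hb hd hud hbd with h | h
      · exact ssubset_of_subset_of_ne h fun hub => hsb.2 (hub ▸ subset_insert x u)
      · exact (hsb.2 (h.trans (subset_insert x u))).elim
    have hxb : x ∉ b := fun hxb => hsb.1 (insert_subset hxb hub.subset)
    exact hmax.not_gt ⟨hb, hxb, d, hd, hsd.subset (mem_insert_self x u), hbd⟩ hub

theorem add_one_le_card (hF : L2Saturated F) : n + 1 ≤ F.card := by
  choose u hu hxu hins using hF.exists_insert_mem
  have hmaps : Set.MapsTo (fun x => insert x (u x)) (univ : Finset (Fin n)) (F.erase ∅) :=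
    fun x _ => mem_erase.2 ⟨insert_ne_empty x (u x), hins x⟩
  have hinj : Set.InjOn (fun x => insert x (u x)) (univ : Finset (Fin n)) :=
    fun x _ y _ h =>
      eq_of_insert_eq_insert_of_not_l2Copy hF.1 (hu x) (hu y) (hins x) (hxu x) (hxu y) h
  have := card_le_card_of_injOn _ hmaps hinj
  rw [card_univ, Fintype.card_fin] at this
  rw [← card_erase_add_one hF.empty_mem]
  omega

end L2Saturated

theorem exists_l2Saturated (n : ℕ) : ∃ F : Finset (Finset (Fin n)), L2Saturated F := by
  have hfree : {G : Finset (Finset (Fin n)) | ¬ L2Copy G}.Nonempty :=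
    ⟨∅, fun ⟨a, ha, _⟩ => notMem_empty a ha⟩
  obtain ⟨F, hF⟩ := (Set.toFinite _).exists_maximal hfree
  refine ⟨F, hF.prop, fun S hS => ?_⟩
  by_contra h
  exact hS (hF.2 h (subset_insert S F) (mem_insert_self S F))

end

theorem stmt13_general {n : ℕ} :
    (∀ F : Finset (Finset (Fin n)), L2Saturated F → D2Saturated F ∧ ∅ ∈ F) ∧
    n + 1 ≤ sInf {k | ∃ F : Finset (Finset (Fin n)), L2Saturated F ∧ F.card = k} := by
  refine ⟨fun F hF => ⟨hF.d2Saturated, hF.empty_mem⟩, ?_⟩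
  obtain ⟨F₀, hF₀⟩ := exists_l2Saturated n
  exact le_csInf ⟨F₀.card, F₀, hF₀, rfl⟩ fun k ⟨F, hF, hk⟩ => hk ▸ hF.add_one_le_card

/-- For `n ≥ 2`, every induced-`Λ₂`-saturated family in `B_n` is also
induced-`D₂`-saturated and contains `∅`; consequently `isat(n, Λ₂) ≥ n + 1`. -/
theorem stmt13 {n : ℕ} (hn : 2 ≤ n) :
    (∀ F : Finset (Finset (Fin n)), L2Saturated F → D2Saturated F ∧ ∅ ∈ F) ∧
    n + 1 ≤ sInf {k | ∃ F : Finset (Finset (Fin n)), L2Saturated F ∧ F.card = k} :=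
  stmt13_general
end

section
/- Let P be a poset with at least two elements having the Unique Cover Twin Property, and let F be an induced-P-saturated family in B_n, n ≥ 3. If there exists a pair {x,y} ⊆ [n] such that no set F ∈ F separates x and y, then x ∉ F and y ∉ F for all F ∈ F. -/
/-- `S` separates `x` and `y`: exactly one of `x, y` belongs to `S`. -/
def Separates {n : ℕ} (S : Finset (Fin n)) (x y : Fin n) : Prop :=
  (x ∈ S ∧ y ∉ S) ∨ (y ∈ S ∧ x ∉ S)

/-- A poset has the Unique Cover Twin Property if every element with precisely
one cover `T` shares that cover with some other element. -/
def UCTP (P : Type*) [PartialOrder P] : Prop :=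
  ∀ S T : P, S ⋖ T → (∀ T', S ⋖ T' → T' = T) → ∃ S', S' ≠ S ∧ S' ⋖ T

/-- `F` contains an induced copy of the poset `P`: an injection into `F` under
which comparabilities and incomparabilities are both preserved. -/
def InducedCopy {n : ℕ} (P : Type*) [PartialOrder P] (F : Finset (Finset (Fin n))) : Prop :=
  ∃ f : P → Finset (Fin n), Function.Injective f ∧ (∀ p, f p ∈ F) ∧
    ∀ a b : P, a ≤ b ↔ f a ⊆ f b

/-- `F` is induced-`P`-saturated in `B_n`. -/
def InducedSaturated {n : ℕ} (P : Type*) [PartialOrder P]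
    (F : Finset (Finset (Fin n))) : Prop :=
  ¬ InducedCopy P F ∧ ∀ S ∉ F, InducedCopy P (insert S F)

/-- Let `P` be a poset with at least two elements having the UCTP, and `F` an
induced-`P`-saturated family in `B_n`, `n ≥ 3`. If no set of `F` separates the
distinct points `x` and `y`, then no set of `F` contains `x` or `y`. -/
theorem stmt15 {n : ℕ} (hn : 3 ≤ n) (P : Type*) [PartialOrder P] [Fintype P]
    [Nontrivial P] (hP : UCTP P) (F : Finset (Finset (Fin n)))
    (hF : InducedSaturated P F) (x y : Fin n) (hxy : x ≠ y)
    (hsep : ∀ S ∈ F, ¬ Separates S x y) :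
    ∀ S ∈ F, x ∉ S ∧ y ∉ S := by
  have xy_mem : ∀ G ∈ F, (x ∈ G ↔ y ∈ G) := by
    intro G hG
    have h := hsep G hG
    simp only [Separates] at h
    tauto
  have key : ∀ S ∈ F, x ∉ S := by
    by_contra hcon
    push_neg at hcon
    obtain ⟨S0, hS0F, hxS0⟩ := hcon
    obtain ⟨S, hS', hSmin⟩ := Finset.exists_min_image
      (F.filter (fun G => x ∈ G)) Finset.card
      ⟨S0, Finset.mem_filter.2 ⟨hS0F, hxS0⟩⟩
    rw [Finset.mem_filter] at hS'
    obtain ⟨hSF, hxS⟩ := hS'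
    have hyS : y ∈ S := (xy_mem S hSF).1 hxS
    have key3 : ∀ G ∈ F, x ∈ G → G ⊆ S → G = S := by
      intro G hG hxG hGS
      exact Finset.eq_of_subset_of_card_le hGS
        (hSmin G (Finset.mem_filter.2 ⟨hG, hxG⟩))
    set A := S.erase y with hA
    have hxA : x ∈ A := Finset.mem_erase.2 ⟨hxy, hxS⟩
    have hyA : y ∉ A := Finset.notMem_erase y S
    have hAF : A ∉ F := fun h => hsep A h (Or.inl ⟨hxA, hyA⟩)
    have hAS : A ⊆ S := Finset.erase_subset y S
    have hANS : A ≠ S := fun h => hyA (h ▸ hyS)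
    obtain ⟨f, finj, fmem, fiff⟩ := hF.2 A hAF
    have fmem' : ∀ q, f q ≠ A → f q ∈ F := by
      intro q h
      rcases Finset.mem_insert.1 (fmem q) with h' | h'
      · exact absurd h' h
      · exact h'
    by_cases hp : ∃ p, f p = A
    · obtain ⟨p, hfp⟩ := hp
      have fact1 : ∀ G ∈ F, (A ⊆ G ↔ S ⊆ G) := by
        intro G hG
        constructor
        · intro h
          have hxG : x ∈ G := h hxA
          have hyG : y ∈ G := (xy_mem G hG).1 hxG
          intro s hs
          by_cases hsy : s = y
          · exact hsy ▸ hyG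
          · exact h (Finset.mem_erase.2 ⟨hsy, hs⟩)
        · intro h
          exact hAS.trans h
      by_cases hq : ∃ q, f q = S
      · obtain ⟨q0, hfq0⟩ := hq
        have hpq0 : p ≠ q0 := fun h => hANS (by rw [← hfp, h, hfq0])
        have hple : p < q0 :=
          lt_of_le_of_ne ((fiff p q0).2 (by rw [hfp, hfq0]; exact hAS)) hpq0
        have habove : ∀ r, p < r → q0 ≤ r := by
          intro r hr
          have hAr : A ⊆ f r := by rw [← hfp]; exact (fiff p r).1 hr.le
          have hrp : r ≠ p := hr.ne'
          have hfr : f r ∈ F := fmem' r (fun h => hrp (finj (h.trans hfp.symm)))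
          have hSr : S ⊆ f r := (fact1 (f r) hfr).1 hAr
          exact (fiff q0 r).2 (by rw [hfq0]; exact hSr)
        have hcov : p ⋖ q0 :=
          ⟨hple, fun {r} h1 h2 => (habove r h1).not_gt h2⟩
        have huniq : ∀ T', p ⋖ T' → T' = q0 := by
          intro T' hT'
          rcases lt_or_eq_of_le (habove T' hT'.lt) with h | h
          · exact absurd h (hT'.2 hple)
          · exact h.symm
        obtain ⟨p', hp'ne, hp'cov⟩ := hP p q0 hcov huniq
        have hfp'S : f p' ⊆ S := by rw [← hfq0]; exact (fiff p' q0).1 hp'cov.le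
        have hfp'A : f p' ≠ A := fun h => hp'ne (finj (h.trans hfp.symm))
        have hfp'F : f p' ∈ F := fmem' p' hfp'A
        have hfp'NS : f p' ≠ S := fun h => hp'cov.ne (finj (h.trans hfq0.symm))
        have hxp' : x ∉ f p' := fun h => hfp'NS (key3 _ hfp'F h hfp'S)
        have hyp' : y ∉ f p' := fun h => hxp' ((xy_mem _ hfp'F).2 h)
        have hsub : f p' ⊆ A := Finset.subset_erase.2 ⟨hfp'S, hyp'⟩
        have hle : p' ≤ p := (fiff p' p).2 (by rw [hfp]; exact hsub)
        exact hp'cov.2 (lt_of_le_of_ne hle hp'ne) hple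
      · push_neg at hq
        classical
        refine hF.1 ⟨fun r => if r = p then S else f r, ?_, ?_, ?_⟩
        · intro a b hab
          dsimp only at hab
          by_cases ha : a = p <;> by_cases hb : b = p
          · rw [ha, hb]
          · rw [if_pos ha, if_neg hb] at hab
            exact absurd hab.symm (hq b)
          · rw [if_neg ha, if_pos hb] at hab
            exact absurd hab (hq a)
          · rw [if_neg ha, if_neg hb] at hab
            exact finj hab
        · intro r
          by_cases hr : r = p
          · simpa [hr] using hSF
          · simp only [hr, ite_false]
            exact fmem' r (fun h => hr (finj (h.trans hfp.symm)))
        · intro a b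
          dsimp only
          by_cases ha : a = p <;> by_cases hb : b = p
          · rw [if_pos ha, if_pos hb, ha, hb]
            simp
          · rw [if_pos ha, if_neg hb, ha]
            have hfb : f b ∈ F := fmem' b (fun h => hb (finj (h.trans hfp.symm)))
            rw [fiff p b, hfp]
            exact fact1 (f b) hfb
          · rw [if_neg ha, if_pos hb, hb]
            have hfa : f a ∈ F := fmem' a (fun h => ha (finj (h.trans hfp.symm)))
            rw [fiff a p, hfp]
            constructor
            · intro h; exact h.trans hAS
            · intro h
              have hxa : x ∉ f a := fun hxh => (hq a) (key3 _ hfa hxh h)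
              have hya : y ∉ f a := fun hyh => hxa ((xy_mem _ hfa).2 hyh)
              exact Finset.subset_erase.2 ⟨h, hya⟩
          · rw [if_neg ha, if_neg hb]
            exact fiff a b
    · push_neg at hp
      exact hF.1 ⟨f, finj, fun q => fmem' q (hp q), fiff⟩
  intro S hS
  refine ⟨key S hS, fun hy => key S hS ((xy_mem S hS).2 hy)⟩
end

section
/- Let P be a poset with at least two elements having the Unique Cover Twin Property, and let F be an induced-P-saturated family in B_n, n ≥ 3. If there exists a pair {x,y} ⊆ [n] such that no set in F separates x and y, then {x,y} ⊆ F for all F ∈ F. -/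
/-- Let `P` be a poset with at least two elements having the UCTP, and `F` an
induced-`P`-saturated family in `B_n`, `n ≥ 3`. If no set of `F` separates the
distinct points `x` and `y`, then every set of `F` contains both `x` and `y`. -/
theorem stmt16 {n : ℕ} (hn : 3 ≤ n) (P : Type*) [PartialOrder P] [Fintype P]
    [Nontrivial P] (hP : UCTP P) (F : Finset (Finset (Fin n)))
    (hF : InducedSaturated P F) (x y : Fin n) (hxy : x ≠ y)
    (hsep : ∀ S ∈ F, ¬ Separates S x y) :
    ∀ S ∈ F, x ∈ S ∧ y ∈ S := by
  have hx : ∀ T ∈ F, (x ∈ T ↔ y ∈ T) := by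
    intro T hT
    have h := hsep T hT
    unfold Separates at h
    constructor <;> intro hm <;> by_contra h' <;> exact h (by tauto)
  suffices hmain : ∀ S ∈ F, x ∈ S by
    intro S hS; exact ⟨hmain S hS, (hx S hS).1 (hmain S hS)⟩
  by_contra hcon
  push_neg at hcon
  obtain ⟨S₀, hS₀F, hS₀x⟩ := hcon
  have hne : (F.filter (fun T => x ∉ T)).Nonempty :=
    ⟨S₀, Finset.mem_filter.2 ⟨hS₀F, hS₀x⟩⟩
  obtain ⟨F₀, hF₀mem, hmax⟩ := Finset.exists_max_image _ (fun T => T.card) hne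
  rw [Finset.mem_filter] at hF₀mem
  obtain ⟨hF₀F, hF₀x⟩ := hF₀mem
  have hF₀y : y ∉ F₀ := fun h => hF₀x ((hx F₀ hF₀F).2 h)
  set G := insert x F₀ with hGdef
  have hxG : x ∈ G := Finset.mem_insert_self _ _
  have hyG : y ∉ G := by
    simp only [hGdef, Finset.mem_insert]
    rintro (h | h)
    · exact hxy h.symm
    · exact hF₀y h
  have hGF : G ∉ F := fun h => hsep G h (Or.inl ⟨hxG, hyG⟩)
  obtain ⟨f, finj, fmem, ford⟩ := hF.2 G hGF
  have hex : ∃ p₀, f p₀ = G := by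
    by_contra h
    push_neg at h
    exact hF.1 ⟨f, finj, fun p => (Finset.mem_insert.1 (fmem p)).resolve_left (h p), ford⟩
  obtain ⟨p₀, hp₀⟩ := hex
  have fmemF : ∀ q, q ≠ p₀ → f q ∈ F := by
    intro q hq
    rcases Finset.mem_insert.1 (fmem q) with h | h
    · exact absurd (finj (h.trans hp₀.symm)) hq
    · exact h
  have hsubF₀ : ∀ q, q ≠ p₀ → f q ⊆ G → f q ⊆ F₀ := by
    intro q hq hsub
    have hy : y ∉ f q := fun h => hyG (hsub h)
    have hxq : x ∉ f q := fun h => hy ((hx _ (fmemF q hq)).1 h)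
    intro z hz
    rcases Finset.mem_insert.1 (hsub hz) with h | h
    · exact absurd (h ▸ hz) hxq
    · exact h
  have hF₀G : F₀ ⊆ G := Finset.subset_insert x F₀
  have hbadeq : ∀ q, F₀ ⊆ f q → ¬ p₀ ≤ q → f q = F₀ := by
    intro q hsub hnle
    have hq : q ≠ p₀ := fun h => hnle (h ▸ le_refl p₀)
    have hxq : x ∉ f q := by
      intro h
      apply hnle
      rw [ford, hp₀]
      exact Finset.insert_subset h hsub
    have hmem : f q ∈ F.filter (fun T => x ∉ T) :=
      Finset.mem_filter.2 ⟨fmemF q hq, hxq⟩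
    exact (Finset.eq_of_subset_of_card_le hsub (hmax _ hmem)).symm
  classical
  by_cases hgood : ∀ q, F₀ ⊆ f q → p₀ ≤ q
  · apply hF.1
    have hupiff : ∀ b, p₀ ≤ b ↔ F₀ ⊆ f b := by
      intro b
      constructor
      · intro h
        refine hF₀G.trans ?_
        rw [← hp₀]
        exact (ford p₀ b).1 h
      · exact hgood b
    have hdniff : ∀ a, a ≠ p₀ → (a ≤ p₀ ↔ f a ⊆ F₀) := by
      intro a ha
      constructor
      · intro h
        exact hsubF₀ a ha (by rw [← hp₀]; exact (ford a p₀).1 h)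
      · intro h
        exact (ford a p₀).2 (by rw [hp₀]; exact h.trans hF₀G)
    refine ⟨fun q => if q = p₀ then F₀ else f q, ?_, ?_, ?_⟩
    · intro a b hab
      dsimp only at hab
      by_cases ha : a = p₀ <;> by_cases hb : b = p₀
      · exact ha.trans hb.symm
      · exfalso
        rw [if_pos ha, if_neg hb] at hab
        have h1 : p₀ ≤ b := (hupiff b).2 (le_of_eq hab)
        have h2 : b ≤ p₀ := (hdniff b hb).2 (le_of_eq hab.symm)
        exact hb (le_antisymm h2 h1)
      · exfalso
        rw [if_neg ha, if_pos hb] at hab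
        have h1 : p₀ ≤ a := (hupiff a).2 (le_of_eq hab.symm)
        have h2 : a ≤ p₀ := (hdniff a ha).2 (le_of_eq hab)
        exact ha (le_antisymm h2 h1)
      · rw [if_neg ha, if_neg hb] at hab
        exact finj hab
    · intro q
      dsimp only
      by_cases hq : q = p₀
      · rw [if_pos hq]; exact hF₀F
      · rw [if_neg hq]; exact fmemF q hq
    · intro a b
      dsimp only
      by_cases ha : a = p₀ <;> by_cases hb : b = p₀
      · rw [if_pos ha, if_pos hb, ha, hb]
        simp
      · rw [if_pos ha, if_neg hb, ha]
        exact hupiff b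
      · rw [if_neg ha, if_pos hb, hb]
        exact hdniff a ha
      · rw [if_neg ha, if_neg hb]
        exact ford a b
  · push_neg at hgood
    obtain ⟨q₀, hq₀sub, hq₀nle⟩ := hgood
    have hq₀eq : f q₀ = F₀ := hbadeq q₀ hq₀sub hq₀nle
    have hq₀ne : q₀ ≠ p₀ := fun h => hq₀nle (h ▸ le_refl p₀)
    have hq₀lt : q₀ < p₀ := by
      have h : q₀ ≤ p₀ := (ford q₀ p₀).2 (by rw [hq₀eq, hp₀]; exact hF₀G)
      exact lt_of_le_of_ne h hq₀ne
    have hup : ∀ r, q₀ < r → p₀ ≤ r := by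
      intro r hr
      by_contra hnle
      have hsub : F₀ ⊆ f r := by
        rw [← hq₀eq]; exact (ford q₀ r).1 hr.le
      have heq := hbadeq r hsub hnle
      exact absurd (finj (heq.trans hq₀eq.symm)) (ne_of_gt hr)
    have hcov : q₀ ⋖ p₀ :=
      ⟨hq₀lt, fun c hc hc' => absurd (hup c hc) hc'.not_ge⟩
    have huniq : ∀ T, q₀ ⋖ T → T = p₀ := by
      intro T hT
      rcases (hup T hT.1).lt_or_eq with h | h
      · exact absurd h (hT.2 hq₀lt)
      · exact h.symm
    obtain ⟨q₁, hq₁ne, hq₁cov⟩ := hP q₀ p₀ hcov huniq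
    have hq₁ltp : q₁ < p₀ := hq₁cov.1
    have hq₁sub : f q₁ ⊆ F₀ :=
      hsubF₀ q₁ (ne_of_lt hq₁ltp) (by rw [← hp₀]; exact (ford q₁ p₀).1 hq₁ltp.le)
    have hle : q₁ ≤ q₀ := (ford q₁ q₀).2 (by rw [hq₀eq]; exact hq₁sub)
    exact hq₁cov.2 (lt_of_le_of_ne hle hq₁ne) hq₀lt
end

section
/- If P is a poset with at least two elements having the Unique Cover Twin Property, then every induced-P-saturated family in B_n (n ≥ 3) separates every pair of points of [n], and hence has size at least ⌈log₂ n⌉. -/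
theorem not_separates_iff {n : ℕ} {S : Finset (Fin n)} {x y : Fin n} :
    ¬ Separates S x y ↔ (x ∈ S ↔ y ∈ S) := by
  unfold Separates
  tauto

theorem Fintype.card_le_two_pow_of_separating {α : Type*} [Fintype α] (F : Finset (Finset α))
    (hF : ∀ x y, (∀ S ∈ F, x ∈ S ↔ y ∈ S) → x = y) : Fintype.card α ≤ 2 ^ F.card := by
  classical
  have hinj : Function.Injective fun (x : α) (S : F) => x ∈ (S : Finset α) :=
    fun x y hxy => hF x y fun S hS => Iff.of_eq (congrFun hxy ⟨S, hS⟩)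
  simpa using Fintype.card_le_of_injective _ hinj

theorem OrderEmbedding.exists_update {P α : Type*} [PartialOrder P] [DecidableEq P] [Preorder α]
    (f : P ↪o α) (p : P) (t : α)
    (htwin : ∀ q, q ≠ p → (f q ≤ f p ↔ f q ≤ t) ∧ (f p ≤ f q ↔ t ≤ f q)) :
    ∃ g : P ↪o α, ⇑g = Function.update f p t := by
  refine ⟨OrderEmbedding.ofMapLEIff (Function.update f p t) fun a b => ?_, rfl⟩
  by_cases ha : a = p <;> by_cases hb : b = p
  · simp [ha, hb]
  · simpa [ha, Function.update_of_ne hb] using (htwin b hb).2.symm.trans f.le_iff_le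
  · simpa [hb, Function.update_of_ne ha] using (htwin a ha).1.symm.trans f.le_iff_le
  · simp [Function.update_of_ne ha, Function.update_of_ne hb]

theorem UCTP.eq_of_le_of_twins {P : Type*} [PartialOrder P] (hP : UCTP P) {a b : P} (hab : a ≤ b)
    (htwin : ∀ c, c ≠ a → c ≠ b → (c ≤ a ↔ c ≤ b) ∧ (a ≤ c ↔ b ≤ c)) : a = b := by
  by_contra hne
  have hlt : a < b := lt_of_le_of_ne hab hne
  have hup : ∀ c, a < c → b ≤ c := by
    rintro c hac
    rcases eq_or_ne c b with rfl | hcb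
    exacts [le_rfl, (htwin c hac.ne' hcb).2.1 hac.le]
  have hdown : ∀ c, c < b → c ≤ a := by
    rintro c hcb
    rcases eq_or_ne c a with rfl | hca
    exacts [le_rfl, (htwin c hca hcb.ne).1.2 hcb.le]
  have hcov : a ⋖ b := ⟨hlt, fun c hac hcb => (hup c hac).not_gt hcb⟩
  obtain ⟨a', ha', ha'b⟩ := hP a b hcov fun b' hb' =>
    ((hup b' hb'.lt).lt_or_eq.resolve_left (hb'.2 hlt)).symm
  exact ha'b.2 ((hdown a' ha'b.lt).lt_of_ne ha') hlt

section Saturated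

variable {n : ℕ} {P : Type*} [PartialOrder P] {F : Finset (Finset (Fin n))}

theorem inducedCopy_iff : InducedCopy P F ↔ ∃ f : P ↪o Finset (Fin n), ∀ p, f p ∈ F := by
  constructor
  · rintro ⟨f, -, hfF, hf⟩
    exact ⟨OrderEmbedding.ofMapLEIff f fun a b => (hf a b).symm, hfF⟩
  · rintro ⟨f, hfF⟩
    exact ⟨f, f.injective, hfF, fun a b => f.le_iff_le.symm⟩

theorem InducedSaturated.exists_embedding_through (hF : InducedSaturated P F)
    {S : Finset (Fin n)} (hS : S ∉ F) :
    ∃ (f : P ↪o Finset (Fin n)) (p : P), f p = S ∧ ∀ q, q ≠ p → f q ∈ F := by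
  obtain ⟨f, hf⟩ := inducedCopy_iff.1 (hF.2 S hS)
  by_cases hSf : ∃ p, f p = S
  · obtain ⟨p, hp⟩ := hSf
    refine ⟨f, p, hp, fun q hq => (Finset.mem_insert.1 (hf q)).resolve_left fun hqS => ?_⟩
    exact hq (f.injective (hqS.trans hp.symm))
  · push Not at hSf
    refine (hF.1 (inducedCopy_iff.2 ⟨f, fun q => ?_⟩)).elim
    exact (Finset.mem_insert.1 (hf q)).resolve_left (hSf q)

theorem InducedSaturated.nonempty [Nontrivial P] (hF : InducedSaturated P F) : F.Nonempty := by
  rcases F.eq_empty_or_nonempty with rfl | hne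
  · obtain ⟨f, p, -, hfF⟩ := hF.exists_embedding_through (Finset.notMem_empty ∅)
    obtain ⟨q, hq⟩ := exists_ne p
    exact (Finset.notMem_empty _ (hfF q hq)).elim
  · exact hne

theorem InducedSaturated.false_of_twin (hP : UCTP P) (hF : InducedSaturated P F)
    {S T : Finset (Fin n)} (hS : S ∉ F) (hT : T ∈ F) (hST : S ⊆ T ∨ T ⊆ S)
    (htwin : ∀ A ∈ F, A ≠ T → (A ⊆ S ↔ A ⊆ T) ∧ (S ⊆ A ↔ T ⊆ A)) : False := by
  classical
  obtain ⟨f, p, rfl, hfF⟩ := hF.exists_embedding_through hS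
  by_cases hTf : ∃ q, f q = T
  · obtain ⟨q, rfl⟩ := hTf
    have hqp : q ≠ p := by rintro rfl; exact hS hT
    have hpq : ∀ c, c ≠ p → c ≠ q → (c ≤ p ↔ c ≤ q) ∧ (p ≤ c ↔ q ≤ c) := by
      intro c hcp hcq
      simpa only [f.le_iff_le] using htwin (f c) (hfF c hcp) (f.injective.ne hcq)
    rcases hST with h | h
    · exact hqp (hP.eq_of_le_of_twins (f.le_iff_le.1 h) hpq).symm
    · exact hqp (hP.eq_of_le_of_twins (f.le_iff_le.1 h) fun c hcq hcp =>
        (hpq c hcp hcq).imp Iff.symm Iff.symm)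
  · push Not at hTf
    obtain ⟨g, hg⟩ := f.exists_update p T fun q hq => htwin (f q) (hfF q hq) (hTf q)
    refine hF.1 (inducedCopy_iff.2 ⟨g, fun q => ?_⟩)
    rcases eq_or_ne q p with rfl | hq
    · simpa [hg] using hT
    · simpa [hg, hq] using hfF q hq

theorem InducedSaturated.exists_notMem [Nontrivial P] (hP : UCTP P) (hF : InducedSaturated P F)
    (y : Fin n) : ∃ A ∈ F, y ∉ A := by
  by_contra! hy
  obtain ⟨M, hM, hMmin⟩ := F.exists_min_image Finset.card hF.nonempty
  refine hF.false_of_twin hP (S := M.erase y) (fun h => M.notMem_erase y (hy _ h)) hM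
    (Or.inl (M.erase_subset y)) fun A hA hAM => ⟨?_, Finset.erase_subset_iff_of_mem (hy A hA)⟩
  exact iff_of_false (fun h => M.notMem_erase y (h (hy A hA)))
    fun h => hAM (Finset.eq_of_subset_of_card_le h (hMmin A hA))

theorem InducedSaturated.exists_separates [Nontrivial P] (hP : UCTP P)
    (hF : InducedSaturated P F) {x y : Fin n} (hxy : x ≠ y) : ∃ S ∈ F, Separates S x y := by
  by_contra! hsep
  have hsame : ∀ A ∈ F, x ∈ A ↔ y ∈ A := fun A hA => not_separates_iff.1 (hsep A hA)
  obtain ⟨A₀, hA₀, hxA₀⟩ := hF.exists_notMem hP x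
  obtain ⟨T, hT, hTmax⟩ :=
    (F.filter (x ∉ ·)).exists_max_image Finset.card ⟨A₀, Finset.mem_filter.2 ⟨hA₀, hxA₀⟩⟩
  rw [Finset.mem_filter] at hT
  have hyS : y ∉ insert x T := by
    simpa [hxy.symm] using fun hyT => hT.2 ((hsame T hT.1).2 hyT)
  refine hF.false_of_twin hP (fun h => hyS ((hsame _ h).1 (T.mem_insert_self x))) hT.1
    (Or.inr (T.subset_insert x)) fun A hA hAT => ⟨?_, ?_⟩
  · by_cases hxA : x ∈ A
    · exact iff_of_false (fun h => hyS (h ((hsame A hA).1 hxA))) fun h => hT.2 (h hxA)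
    · exact Finset.subset_insert_iff_of_notMem hxA
  · rw [Finset.insert_subset_iff]
    refine ⟨And.right, fun hTA => ⟨?_, hTA⟩⟩
    by_contra hxA
    exact hAT (Finset.eq_of_subset_of_card_le hTA (hTmax A (Finset.mem_filter.2 ⟨hA, hxA⟩))).symm

end Saturated

theorem stmt17_general {n : ℕ} (P : Type*) [PartialOrder P]
    [Nontrivial P] (hP : UCTP P) (F : Finset (Finset (Fin n)))
    (hF : InducedSaturated P F) :
    (∀ x y : Fin n, x ≠ y → ∃ S ∈ F, Separates S x y) ∧
    Nat.clog 2 n ≤ F.card := by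
  have hsep : ∀ x y : Fin n, x ≠ y → ∃ S ∈ F, Separates S x y :=
    fun _ _ hxy => hF.exists_separates hP hxy
  refine ⟨hsep, (Nat.clog_le_iff_le_pow one_lt_two).2 ?_⟩
  simpa using Fintype.card_le_two_pow_of_separating F fun x y hsame => by
    by_contra hne
    obtain ⟨S, hS, hxy⟩ := hsep x y hne
    exact not_separates_iff.2 (hsame S hS) hxy

/-- If `P` is a poset with at least two elements having the UCTP, then every
induced-`P`-saturated family in `B_n` (`n ≥ 3`) separates every pair of points
of `[n]`, and hence has size at least `⌈log₂ n⌉`. -/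
theorem stmt17 {n : ℕ} (hn : 3 ≤ n) (P : Type*) [PartialOrder P] [Fintype P]
    [Nontrivial P] (hP : UCTP P) (F : Finset (Finset (Fin n)))
    (hF : InducedSaturated P F) :
    (∀ x y : Fin n, x ≠ y → ∃ S ∈ F, Separates S x y) ∧
    Nat.clog 2 n ≤ F.card :=
  stmt17_general P hP F hF
end

section
/- For n ≥ 3, the family F = {{1}} ∪ {{1,i} : i ∈ [n], i ≠ 1} ∪ {[n]\{1}} ∪ {[n]\{1,i} : i ∈ [n], i ≠ 1} contains no induced copy of the diamond D₂ in B_n, does not contain ∅ or [n], and has size 2n. -/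
/-- For `n ≥ 3`, the family
`{{1}} ∪ {{1,i} : i ≠ 1} ∪ {[n]\{1}} ∪ {[n]\{1,i} : i ≠ 1}`
(with `1` realized as the point `0` of `Fin n`) contains no induced copy of the
diamond, avoids `∅` and `[n]`, and has size `2n`. -/
theorem stmt19 {n : ℕ} (hn : 3 ≤ n) :
    let z : Fin n := ⟨0, by omega⟩
    let F : Finset (Finset (Fin n)) :=
      {({z} : Finset (Fin n))} ∪
      ((Finset.univ.erase z).image fun i => ({z, i} : Finset (Fin n))) ∪
      {({z} : Finset (Fin n))ᶜ} ∪
      ((Finset.univ.erase z).image fun i => ({z, i} : Finset (Fin n))ᶜ)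
    ¬ D2Copy F ∧ ∅ ∉ F ∧ (Finset.univ : Finset (Fin n)) ∉ F ∧ F.card = 2 * n := by
  intro z F
  have hcard : Fintype.card (Fin n) = n := Fintype.card_fin n
  have key : ∀ X ∈ F, (z ∈ X ∧ 1 ≤ X.card ∧ X.card ≤ 2) ∨
      (z ∉ X ∧ n ≤ X.card + 2 ∧ X.card + 1 ≤ n) := by
    intro X hX
    simp only [F, Finset.mem_union, Finset.mem_image, Finset.mem_singleton,
      Finset.mem_erase] at hX
    rcases hX with ((hX | ⟨i, ⟨hi, -⟩, rfl⟩) | hX) | ⟨i, ⟨hi, -⟩, rfl⟩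
    · subst hX; left; simp
    · left
      refine ⟨by simp, ?_⟩
      have h2 : ({z, i} : Finset (Fin n)).card = 2 := Finset.card_pair (Ne.symm hi)
      omega
    · subst hX; right
      have hc : ({z}ᶜ : Finset (Fin n)).card = n - 1 := by
        rw [Finset.card_compl, Finset.card_singleton, hcard]
      refine ⟨by simp, by omega, by omega⟩
    · right
      have hc : (({z, i} : Finset (Fin n))ᶜ).card = n - 2 := by
        rw [Finset.card_compl, Finset.card_pair (Ne.symm hi), hcard]
      refine ⟨by simp, by omega, by omega⟩
  have no3 : ∀ A ∈ F, ∀ B ∈ F, ∀ D ∈ F, A ⊂ B → B ⊂ D → False := by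
    intro A hA B hB D hD hAB hBD
    have cAB := Finset.card_lt_card hAB
    have cBD := Finset.card_lt_card hBD
    have sAB := hAB.subset
    have sBD := hBD.subset
    rcases key A hA with ⟨hzA, h1, h2⟩ | ⟨hzA, h1, h2⟩ <;>
      rcases key B hB with ⟨hzB, h3, h4⟩ | ⟨hzB, h3, h4⟩ <;>
        rcases key D hD with ⟨hzD, h5, h6⟩ | ⟨hzD, h5, h6⟩ <;>
          first
            | omega
            | exact hzB (sAB hzA)
            | exact hzD (sBD hzB)
  refine ⟨?_, ?_, ?_, ?_⟩
  · rintro ⟨A, hA, B, hB, C, hC, D, hD, hAB, hBD, -, -, -⟩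
    exact no3 A hA B hB D hD hAB hBD
  · intro h
    rcases key ∅ h with ⟨h0, -, -⟩ | ⟨-, h1, -⟩
    · simp at h0
    · simp at h1; omega
  · intro h
    rcases key Finset.univ h with ⟨-, -, h2⟩ | ⟨h0, -, -⟩
    · rw [Finset.card_univ, hcard] at h2; omega
    · exact h0 (Finset.mem_univ z)
  · have inj1 : Set.InjOn (fun i => ({z, i} : Finset (Fin n)))
        (Finset.univ.erase z) := by
      intro i hi j hj h
      simp only [Finset.coe_erase, Set.mem_diff, Finset.mem_coe,
        Set.mem_singleton_iff] at hi hj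
      have h' : ({z, i} : Finset (Fin n)) = {z, j} := h
      have hmem : i ∈ ({z, j} : Finset (Fin n)) := by
        rw [← h']; simp
      simp only [Finset.mem_insert, Finset.mem_singleton] at hmem
      tauto
    have inj2 : Set.InjOn (fun i => (({z, i} : Finset (Fin n))ᶜ))
        (Finset.univ.erase z) := by
      intro i hi j hj h
      exact inj1 hi hj (compl_injective h)
    have cB : ((Finset.univ.erase z).image
        fun i => ({z, i} : Finset (Fin n))).card = n - 1 := by
      rw [Finset.card_image_of_injOn inj1,
        Finset.card_erase_of_mem (Finset.mem_univ z), Finset.card_univ, hcard]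
    have cD : ((Finset.univ.erase z).image
        fun i => (({z, i} : Finset (Fin n))ᶜ)).card = n - 1 := by
      rw [Finset.card_image_of_injOn inj2,
        Finset.card_erase_of_mem (Finset.mem_univ z), Finset.card_univ, hcard]
    have d1 : Disjoint {({z} : Finset (Fin n))}
        ((Finset.univ.erase z).image fun i => ({z, i} : Finset (Fin n))) := by
      rw [Finset.disjoint_singleton_left, Finset.mem_image]
      rintro ⟨i, hi, h⟩
      simp only [Finset.mem_erase, Finset.mem_univ, and_true] at hi
      apply hi
      have : i ∈ ({z} : Finset (Fin n)) := by rw [← h]; simp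
      simpa using this
    have d2 : Disjoint ({({z} : Finset (Fin n))} ∪
        ((Finset.univ.erase z).image fun i => ({z, i} : Finset (Fin n))))
        {({z} : Finset (Fin n))ᶜ} := by
      rw [Finset.disjoint_singleton_right, Finset.mem_union, Finset.mem_image]
      rintro (h | ⟨i, hi, h⟩)
      · have : z ∈ ({z} : Finset (Fin n))ᶜ := by
          rw [Finset.mem_singleton] at h; rw [← h]; simp
        simp at this
      · have : z ∈ ({z} : Finset (Fin n))ᶜ := by rw [← h]; simp
        simp at this
    have d3 : Disjoint (({({z} : Finset (Fin n))} ∪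
        ((Finset.univ.erase z).image fun i => ({z, i} : Finset (Fin n)))) ∪
        {({z} : Finset (Fin n))ᶜ})
        ((Finset.univ.erase z).image fun i => (({z, i} : Finset (Fin n))ᶜ)) := by
      rw [Finset.disjoint_right]
      rintro a ha hmem
      simp only [Finset.mem_image, Finset.mem_erase, Finset.mem_univ,
        and_true] at ha
      obtain ⟨i, hi, rfl⟩ := ha
      simp only [Finset.mem_union, Finset.mem_singleton, Finset.mem_image,
        Finset.mem_erase, Finset.mem_univ, and_true] at hmem
      rcases hmem with (h | ⟨j, hj, h⟩) | h
      · have : z ∈ (({z, i} : Finset (Fin n))ᶜ) := by rw [h]; simp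
        simp at this
      · have : z ∈ (({z, i} : Finset (Fin n))ᶜ) := by rw [← h]; simp
        simp at this
      · have h2 : (({z, i} : Finset (Fin n))ᶜ).card = n - 2 := by
          rw [Finset.card_compl, Finset.card_pair (Ne.symm hi), hcard]
        have h3 : (({z} : Finset (Fin n))ᶜ).card = n - 1 := by
          rw [Finset.card_compl, Finset.card_singleton, hcard]
        rw [← h] at h3
        omega
    simp only [F]
    rw [Finset.card_union_of_disjoint d3, Finset.card_union_of_disjoint d2,
      Finset.card_union_of_disjoint d1, Finset.card_singleton,
      Finset.card_singleton, cB, cD]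
    omega
end
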